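/- arXiv:2405.17275 — 5 statements merged into one kernel-verified Lean document; each statement's English description precedes it below -/
import Mathlib

section
/- Let p ≥ 2 and d ≥ 1. The combined rewriting system (W(d), →) is terminating and confluent; consequently, every word w = (i, ε) ∈ W(d) has a unique normal form w' = (x_{j(1)}, …, x_{j(r)}, x_{j(r+1)}^{−1}, …, x_{j(d)}^{−1}) for some r ≤ d, and this normal form satisfies: eval(w') = eval(w); j(l) + p − 1 ≥ j(l+1) for all 1 ≤ l ≤ r − 1; and j(l) ≤ j(l+1) + p − 1 for all r + 1 ≤ l ≤ d − 1. -/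
/-!
The combined rewriting system `→ = ↣* ∘ ⤳*` on words of length `d` in the
generators of the Brown–Thompson group `F_p` and their inverses is terminating
and confluent, and every word has a unique normal form
`(x_{j 1}, …, x_{j r}, x_{j (r+1)}⁻¹, …, x_{j d}⁻¹)` with the stated
index conditions.
-/

/-- Relators of the Brown–Thompson group `F_p`. -/
def brownRels (p : ℕ) : Set (FreeGroup ℕ) :=
  { r | ∃ m k : ℕ, k < m ∧
      r = FreeGroup.of m * FreeGroup.of k *
        (FreeGroup.of k * FreeGroup.of (m + (p - 1)))⁻¹ }

/-- The Brown–Thompson group `F_p`. -/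
abbrev Fp (p : ℕ) := PresentedGroup (brownRels p)

/-- The standard generators `x_n` of `F_p`. -/
def xg (p n : ℕ) : Fp p := PresentedGroup.of n

/-- A letter: an index together with a sign (`true` = exponent `+1`,
`false` = exponent `-1`). -/
abbrev Letter := ℕ × Bool

/-- Evaluation of a word in `F_p`. -/
def evalL (p : ℕ) (w : List Letter) : Fp p :=
  (w.map fun l => if l.2 then xg p l.1 else (xg p l.1)⁻¹).prod

/-- The word of length `d` given by indices `i` and signs `ε`. -/
def mkW (d : ℕ) (i : Fin d → ℕ) (ε : Fin d → Bool) : List Letter :=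
  (List.finRange d).map fun l => (i l, ε l)

/-- A single `⤳`-replacement on an adjacent pair `(x_a⁻¹, x_b)`. -/
inductive SquigPair (p : ℕ) : Letter → Letter → Letter → Letter → Prop
  | gt {a b : ℕ} (h : b < a) :
      SquigPair p (a, false) (b, true) (b, true) (a + (p - 1), false)
  | lt {a b : ℕ} (h : a < b) :
      SquigPair p (a, false) (b, true) (b + (p - 1), true) (a, false)
  | eq {a : ℕ} :
      SquigPair p (a, false) (a, true) (a, true) (a, false)

/-- A single `↣`-replacement on an adjacent pair of equal signs. -/
inductive HookPair (p : ℕ) : Letter → Letter → Letter → Letter → Prop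
  | pos {a b : ℕ} (h : a + (p - 1) < b) :
      HookPair p (a, true) (b, true) (b - (p - 1), true) (a, true)
  | neg {a b : ℕ} (h : b + (p - 1) < a) :
      HookPair p (a, false) (b, false) (b, false) (a - (p - 1), false)

/-- One step of the relation `⤳`. -/
def Squig (p : ℕ) (w w' : List Letter) : Prop :=
  ∃ (w₁ w₂ : List Letter) (l₁ l₂ l₁' l₂' : Letter),
    SquigPair p l₁ l₂ l₁' l₂' ∧ w = w₁ ++ l₁ :: l₂ :: w₂ ∧ w' = w₁ ++ l₁' :: l₂' :: w₂

/-- One step of the relation `↣` (defined on `⤳`-irreducible words). -/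
def Hook (p : ℕ) (w w' : List Letter) : Prop :=
  (∀ u, ¬ Squig p w u) ∧
  ∃ (w₁ w₂ : List Letter) (l₁ l₂ l₁' l₂' : Letter),
    HookPair p l₁ l₂ l₁' l₂' ∧ w = w₁ ++ l₁ :: l₂ :: w₂ ∧ w' = w₁ ++ l₁' :: l₂' :: w₂

/-- The composite relation `→`: first the reflexive–transitive closure of `⤳`,
then that of `↣`. -/
def StepTo (p : ℕ) (w w' : List Letter) : Prop :=
  ∃ u, Relation.ReflTransGen (Squig p) w u ∧ Relation.ReflTransGen (Hook p) u w'

/-- A word is a normal form if no `⤳`-step and no `↣`-step applies to it. -/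
def IsNF (p : ℕ) (w : List Letter) : Prop :=
  (∀ u, ¬ Squig p w u) ∧ ∀ u, ¬ Hook p w u

theorem newman {α : Type*} {R : α → α → Prop}
    (wf : WellFounded (fun a b => R b a))
    (lc : ∀ w a b, R w a → R w b → ∃ c, Relation.ReflTransGen R a c ∧ Relation.ReflTransGen R b c) :
    ∀ w a b, Relation.ReflTransGen R w a → Relation.ReflTransGen R w b →
      ∃ c, Relation.ReflTransGen R a c ∧ Relation.ReflTransGen R b c := by
  intro w
  induction w using wf.induction with
  | _ w ih =>
    intro a b hwa hwb
    rcases Relation.ReflTransGen.cases_head hwa with rfl | ⟨a₁, hwa₁, ha₁a⟩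
    · exact ⟨b, hwb, .refl⟩
    rcases Relation.ReflTransGen.cases_head hwb with rfl | ⟨b₁, hwb₁, hb₁b⟩
    · exact ⟨a, .refl, hwa⟩
    obtain ⟨c₀, hac₀, hbc₀⟩ := lc w a₁ b₁ hwa₁ hwb₁
    obtain ⟨d, had, hc₀d⟩ := ih a₁ hwa₁ a c₀ ha₁a hac₀
    obtain ⟨e, hde, hbe⟩ := ih b₁ hwb₁ d b (hbc₀.trans hc₀d) hb₁b
    exact ⟨e, had.trans hde, hbe⟩
theorem two_decomp {α : Type*} (w₁ : List α) (a b : α) (w₂ : List α) (v₁ : List α) (c d : α) (v₂ : List α)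
    (h : w₁ ++ a::b::w₂ = v₁ ++ c::d::v₂) :
    (w₁ = v₁ ∧ a = c ∧ b = d ∧ w₂ = v₂) ∨
    (v₁ = w₁ ++ [a] ∧ b = c ∧ w₂ = d :: v₂) ∨
    (w₁ = v₁ ++ [c] ∧ a = d ∧ v₂ = b :: w₂) ∨
    (∃ m, v₁ = w₁ ++ a :: b :: m ∧ w₂ = m ++ c :: d :: v₂) ∨
    (∃ m, w₁ = v₁ ++ c :: d :: m ∧ v₂ = m ++ a :: b :: w₂) := by
  induction w₁ generalizing v₁ with
  | nil =>
    match v₁ with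
    | [] => simp_all
    | [x] =>
      simp only [List.nil_append, List.cons_append, List.cons.injEq, List.nil_append] at h
      exact Or.inr (Or.inl ⟨by simp [h.1], h.2.1, h.2.2⟩)
    | x :: y :: t =>
      simp only [List.nil_append, List.cons_append, List.cons.injEq] at h
      exact Or.inr (Or.inr (Or.inr (Or.inl ⟨t, by simp [h.1, h.2.1, h.2.2], h.2.2 ▸ rfl⟩)))
  | cons x t ih =>
    match v₁ with
    | [] =>
      match t with
      | [] =>
        simp only [List.cons_append, List.nil_append, List.cons.injEq] at h
        exact Or.inr (Or.inr (Or.inl ⟨by simp [h.1], h.2.1, h.2.2.symm⟩))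
      | z :: t' =>
        simp only [List.cons_append, List.nil_append, List.cons.injEq] at h
        exact Or.inr (Or.inr (Or.inr (Or.inr ⟨t', by simp [h.1, h.2.1, h.2.2], h.2.2.symm⟩)))
    | y :: s =>
      simp only [List.cons_append, List.cons.injEq] at h
      rcases ih s h.2 with h1 | h2 | h3 | ⟨m, h4⟩ | ⟨m, h5⟩
      · exact Or.inl ⟨by simp [h.1, h1.1], h1.2⟩
      · exact Or.inr (Or.inl ⟨by simp [h.1, h2.1], h2.2⟩)
      · exact Or.inr (Or.inr (Or.inl ⟨by simp [h.1, h3.1], h3.2⟩))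
      · exact Or.inr (Or.inr (Or.inr (Or.inl ⟨m, by simp [h.1, h4.1], h4.2⟩)))
      · exact Or.inr (Or.inr (Or.inr (Or.inr ⟨m, by simp [h.1, h5.1], h5.2⟩)))
-- chunk 1: termination and irreducibility characterizations
section BTaux
open Relation List

variable {p : ℕ}

/-- signs only matter -/
theorem squigPair_snd {x y x' y' : Letter} (h : SquigPair p x y x' y') :
    x.2 = false ∧ y.2 = true ∧ x'.2 = true ∧ y'.2 = false := by
  cases h <;> simp

theorem hookPair_snd {x y x' y' : Letter} (h : HookPair p x y x' y') :
    x'.2 = x.2 ∧ y'.2 = y.2 ∧ x.2 = y.2 := by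
  cases h <;> simp

theorem squigPair_fun {x y a b c d : Letter} (h : SquigPair p x y a b)
    (h' : SquigPair p x y c d) : a = c ∧ b = d := by
  cases h <;> cases h' <;> simp_all <;> omega

theorem hookPair_fun {x y a b c d : Letter} (h : HookPair p x y a b)
    (h' : HookPair p x y c d) : a = c ∧ b = d := by
  cases h <;> cases h' <;> simp_all

theorem squigPair_total {a b : ℕ} :
    ∃ x' y', SquigPair p (a, false) (b, true) x' y' := by
  rcases lt_trichotomy a b with h | rfl | h
  · exact ⟨_, _, SquigPair.lt h⟩
  · exact ⟨_, _, SquigPair.eq⟩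
  · exact ⟨_, _, SquigPair.gt h⟩

def hkOK (p : ℕ) (x y : Letter) : Prop :=
  ¬((x.2 = true ∧ y.2 = true ∧ x.1 + (p-1) < y.1) ∨
    (x.2 = false ∧ y.2 = false ∧ y.1 + (p-1) < x.1))

theorem hookPair_total {x y : Letter} (h : ¬ hkOK p x y) :
    ∃ x' y', HookPair p x y x' y' := by
  rw [hkOK, not_not] at h
  obtain ⟨a, sa⟩ := x; obtain ⟨b, sb⟩ := y
  rcases h with ⟨h1, h2, h3⟩ | ⟨h1, h2, h3⟩
  · simp only at h1 h2 h3; subst h1; subst h2; exact ⟨_, _, HookPair.pos h3⟩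
  · simp only at h1 h2 h3; subst h1; subst h2; exact ⟨_, _, HookPair.neg h3⟩

theorem not_chain'_decomp {α : Type*} {R : α → α → Prop} :
    ∀ {l : List α}, ¬ List.Chain' R l → ∃ l₁ a b l₂, l = l₁ ++ a::b::l₂ ∧ ¬ R a b
  | [], h => absurd List.isChain_nil h
  | [a], h => absurd (List.isChain_singleton a) h
  | a :: b :: t, h => by
    by_cases hab : R a b
    · have ht : ¬ List.Chain' R (b :: t) := fun hc => h (List.isChain_cons_cons.mpr ⟨hab, hc⟩)
      obtain ⟨l₁, x, y, l₂, he, hxy⟩ := not_chain'_decomp ht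
      exact ⟨a :: l₁, x, y, l₂, by rw [he]; rfl, hxy⟩
    · exact ⟨[], a, b, t, rfl, hab⟩

theorem chain'_of_decomp {α : Type*} {R : α → α → Prop} {l₁ l₂ : List α} {a b : α}
    (h : List.Chain' R (l₁ ++ a :: b :: l₂)) : R a b := by
  have : List.Chain' R [a, b] := h.infix ⟨l₁, l₂, by simp⟩
  exact List.isChain_pair.mp this

/-- Squig-irreducibility characterization. -/
def SqI (w : List Letter) : Prop := List.Chain' (fun x y : Letter => y.2 ≤ x.2) w

theorem sqI_iff (w : List Letter) : (∀ u, ¬ Squig p w u) ↔ SqI w := by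
  constructor
  · intro h
    by_contra hc
    obtain ⟨l₁, x, y, l₂, he, hxy⟩ := not_chain'_decomp hc
    have hx : x.2 = false ∧ y.2 = true := by
      revert hxy; cases x.2 <;> cases y.2 <;> simp
    obtain ⟨a, sa⟩ := x; obtain ⟨b, sb⟩ := y
    simp only at hx
    obtain ⟨hx1, hx2⟩ := hx
    subst hx1; subst hx2
    obtain ⟨x', y', hp⟩ := @squigPair_total p a b
    exact h _ ⟨l₁, l₂, _, _, x', y', hp, he, rfl⟩
  · rintro hc u ⟨w₁, w₂, l₁, l₂, l₁', l₂', hp, rfl, rfl⟩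
    have := chain'_of_decomp hc
    have hs := squigPair_snd hp
    rw [hs.1, hs.2.1] at this
    exact absurd this (by decide)

theorem sqI_iff_snd (w : List Letter) :
    SqI w ↔ List.Chain' (fun x y : Bool => y ≤ x) (w.map Prod.snd) := by
  exact (List.isChain_map (R := fun x y : Bool => y ≤ x) (l := w) Prod.snd).symm

theorem sqI_of_snd_eq {w u : List Letter} (h : u.map Prod.snd = w.map Prod.snd)
    (hw : SqI w) : SqI u := by
  rw [sqI_iff_snd] at hw ⊢
  rw [h]; exact hw

end BTaux
-- chunk 2: hook irreducibility, measures, well-foundedness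
section BTaux2
open Relation List

variable {p : ℕ}

/-- Hook-irreducibility characterization (for Squig-irreducible words). -/
theorem hkI_iff {w : List Letter} (hs : ∀ u, ¬ Squig p w u) :
    (∀ u, ¬ Hook p w u) ↔ List.Chain' (hkOK p) w := by
  constructor
  · intro h
    by_contra hc
    obtain ⟨l₁, x, y, l₂, he, hxy⟩ := not_chain'_decomp hc
    obtain ⟨x', y', hp⟩ := hookPair_total hxy
    exact h _ ⟨hs, l₁, l₂, x, y, x', y', hp, he, rfl⟩
  · rintro hc u ⟨-, w₁, w₂, l₁, l₂, l₁', l₂', hp, rfl, rfl⟩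
    have := chain'_of_decomp hc
    cases hp with
    | pos h => exact this (Or.inl ⟨rfl, rfl, h⟩)
    | neg h => exact this (Or.inr ⟨rfl, rfl, h⟩)

/-- number of positive letters -/
def trs (w : List Letter) : ℕ := w.countP (fun l => l.2)
/-- number of inversions (negative before positive) -/
def invc : List Letter → ℕ
  | [] => 0
  | l :: t => (if l.2 then 0 else trs t) + invc t
/-- sum of indices -/
def sids (w : List Letter) : ℕ := (w.map Prod.fst).sum

theorem trs_append (xs ys : List Letter) : trs (xs ++ ys) = trs xs + trs ys :=
  List.countP_append

theorem sids_append (xs ys : List Letter) : sids (xs ++ ys) = sids xs + sids ys := by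
  simp [sids]

theorem invc_append (xs ys : List Letter) :
    invc (xs ++ ys) = invc xs + (xs.countP fun l => !l.2) * trs ys + invc ys := by
  induction xs with
  | nil => simp [invc]
  | cons x t ih =>
    rcases x with ⟨a, s⟩
    cases s <;> simp [invc, List.countP_cons, ih, trs_append] <;> ring

theorem squig_invc {w u : List Letter} (h : Squig p w u) :
    invc u + 1 = invc w ∧ trs u = trs w := by
  obtain ⟨w₁, w₂, l₁, l₂, l₁', l₂', hp, rfl, rfl⟩ := h
  have hs := squigPair_snd hp
  obtain ⟨a, sa⟩ := l₁; obtain ⟨b, sb⟩ := l₂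
  obtain ⟨a', sa'⟩ := l₁'; obtain ⟨b', sb'⟩ := l₂'
  simp only at hs
  rw [hs.1, hs.2.1, hs.2.2.1, hs.2.2.2]
  rw [invc_append, invc_append, trs_append, trs_append]
  refine ⟨?_, ?_⟩ <;> simp [invc, trs, List.countP_cons] <;> ring_nf <;> omega

theorem hook_measures {w u : List Letter} (h : Hook p w u) :
    invc u = invc w ∧ trs u = trs w ∧ sids u + (p - 1) = sids w ∧
    u.map Prod.snd = w.map Prod.snd := by
  obtain ⟨-, w₁, w₂, l₁, l₂, l₁', l₂', hp, rfl, rfl⟩ := h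
  cases hp with
  | pos h =>
    refine ⟨?_, ?_, ?_, by simp⟩
    · rw [invc_append, invc_append]; simp [invc, trs, List.countP_cons]
    · rw [trs_append, trs_append]; simp [trs, List.countP_cons]
    · rw [sids_append, sids_append]; simp [sids]; omega
  | neg h =>
    refine ⟨?_, ?_, ?_, by simp⟩
    · rw [invc_append, invc_append]; simp [invc, trs, List.countP_cons]
    · rw [trs_append, trs_append]; simp [trs, List.countP_cons]
    · rw [sids_append, sids_append]; simp [sids]; omega

theorem squig_snd {w u : List Letter} (h : Squig p w u) :
    ∃ s₁ s₂, w.map Prod.snd = s₁ ++ false :: true :: s₂ ∧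
      u.map Prod.snd = s₁ ++ true :: false :: s₂ := by
  obtain ⟨w₁, w₂, l₁, l₂, l₁', l₂', hp, rfl, rfl⟩ := h
  have hs := squigPair_snd hp
  exact ⟨w₁.map Prod.snd, w₂.map Prod.snd, by simp [hs.1, hs.2.1], by simp [hs.2.2.1, hs.2.2.2]⟩

theorem squig_length {w u : List Letter} (h : Squig p w u) : u.length = w.length := by
  obtain ⟨w₁, w₂, l₁, l₂, l₁', l₂', hp, rfl, rfl⟩ := h
  simp

theorem hook_length {w u : List Letter} (h : Hook p w u) : u.length = w.length := by
  obtain ⟨-, w₁, w₂, l₁, l₂, l₁', l₂', hp, rfl, rfl⟩ := h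
  simp

theorem step_wf (hp : 2 ≤ p) :
    WellFounded (fun a b : List Letter => Squig p b a ∨ Hook p b a) := by
  have key : ∀ a b : List Letter, (Squig p b a ∨ Hook p b a) →
      Prod.Lex (· < ·) (· < ·) (invc a, sids a) (invc b, sids b) := by
    intro a b h
    rcases h with h | h
    · exact Prod.Lex.left _ _ (by have := (squig_invc h).1; omega)
    · obtain ⟨h1, -, h3, -⟩ := hook_measures h
      rw [h1]
      exact Prod.Lex.right _ (by omega)
  refine Subrelation.wf ?_ (InvImage.wf (fun w => (invc w, sids w))
    (WellFounded.prod_lex wellFounded_lt wellFounded_lt))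
  intro a b h
  exact key a b h

end BTaux2
-- chunk 3: local confluence
section BTaux3
open Relation List

variable {p : ℕ}

theorem mkSquig {w w' : List Letter} {w₁ w₂ : List Letter} {x y x' y' : Letter}
    (hp : SquigPair p x y x' y') (he : w = w₁ ++ x :: y :: w₂)
    (he' : w' = w₁ ++ x' :: y' :: w₂) : Squig p w w' :=
  ⟨w₁, w₂, x, y, x', y', hp, he, he'⟩

theorem sqNoStep_of_snd {w u : List Letter} (h : u.map Prod.snd = w.map Prod.snd)
    (hw : ∀ v, ¬ Squig p w v) : ∀ v, ¬ Squig p u v := by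
  rw [sqI_iff] at *
  exact sqI_of_snd_eq h hw

theorem mkHook {w w' : List Letter} {w₁ w₂ : List Letter} {x y x' y' : Letter}
    (hw : ∀ v, ¬ Squig p w v) (hp : HookPair p x y x' y')
    (he : w = w₁ ++ x :: y :: w₂) (he' : w' = w₁ ++ x' :: y' :: w₂) : Hook p w w' :=
  ⟨hw, w₁, w₂, x, y, x', y', hp, he, he'⟩

theorem squig_lc (w a b : List Letter) (ha : Squig p w a) (hb : Squig p w b) :
    ∃ c, ReflTransGen (Squig p) a c ∧ ReflTransGen (Squig p) b c := by
  obtain ⟨w₁, w₂, x, y, x', y', hxy, rfl, rfl⟩ := ha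
  obtain ⟨v₁, v₂, u, v, u', v', huv, he, rfl⟩ := hb
  rcases two_decomp w₁ x y w₂ v₁ u v v₂ he with
    ⟨h1, h2, h3, h4⟩ | ⟨h1, h2, h3⟩ | ⟨h1, h2, h3⟩ | ⟨m, h1, h2⟩ | ⟨m, h1, h2⟩
  · subst h1; subst h2; subst h3; subst h4
    obtain ⟨rfl, rfl⟩ := squigPair_fun hxy huv
    exact ⟨_, .refl, .refl⟩
  · -- overlap: impossible by signs
    exact absurd ((squigPair_snd huv).1) (by rw [← h2, (squigPair_snd hxy).2.1]; simp)
  · exact absurd ((squigPair_snd hxy).1) (by rw [h2, (squigPair_snd huv).2.1]; simp)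
  · subst h1; subst h2
    refine ⟨w₁ ++ x' :: y' :: (m ++ u' :: v' :: v₂), .single ?_, .single ?_⟩
    · exact mkSquig huv (w₁ := w₁ ++ x' :: y' :: m) (w₂ := v₂) (by simp) (by simp)
    · exact mkSquig hxy (w₁ := w₁) (w₂ := m ++ u' :: v' :: v₂) (by simp) (by simp)
  · subst h1; subst h2
    refine ⟨v₁ ++ u' :: v' :: (m ++ x' :: y' :: w₂), .single ?_, .single ?_⟩
    · exact mkSquig huv (w₁ := v₁) (w₂ := m ++ x' :: y' :: w₂) (by simp) (by simp)
    · exact mkSquig hxy (w₁ := v₁ ++ u' :: v' :: m) (w₂ := w₂) (by simp) (by simp)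

theorem hook_overlap {w : List Letter} (hs : ∀ v, ¬ Squig p w v)
    {w₁ v₂ : List Letter} {x y z x' y' u' v' : Letter}
    (hxy : HookPair p x y x' y') (hyz : HookPair p y z u' v')
    (he : w = w₁ ++ x :: y :: z :: v₂) :
    ∃ c, ReflTransGen (Hook p) (w₁ ++ x' :: y' :: z :: v₂) c ∧
         ReflTransGen (Hook p) (w₁ ++ x :: u' :: v' :: v₂) c := by
  subst he
  cases hxy with
  | @pos a b h1 =>
    cases hyz with
    | @pos b c h2 =>
      refine ⟨w₁ ++ ((c - (p-1)) - (p-1), true) :: (b - (p-1), true) :: (a, true) :: v₂,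
        ReflTransGen.head (b := w₁ ++ (b - (p-1), true) :: (c - (p-1), true) :: (a, true) :: v₂)
          ?_ (.single ?_),
        ReflTransGen.head (b := w₁ ++ ((c - (p-1)) - (p-1), true) :: (a, true) :: (b, true) :: v₂)
          ?_ (.single ?_)⟩
      · exact mkHook (sqNoStep_of_snd (by simp) hs) (HookPair.pos (show a + (p-1) < c by omega))
          (w₁ := w₁ ++ [(b - (p-1), true)]) (w₂ := v₂) (by simp) (by simp)
      · exact mkHook (sqNoStep_of_snd (by simp) hs)
          (HookPair.pos (show (b - (p-1)) + (p-1) < c - (p-1) by omega)) (w₁ := w₁)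
          (w₂ := (a, true) :: v₂) (by simp) (by simp)
      · exact mkHook (sqNoStep_of_snd (by simp) hs)
          (HookPair.pos (show a + (p-1) < c - (p-1) by omega)) (w₁ := w₁)
          (w₂ := (b, true) :: v₂) (by simp) (by simp)
      · exact mkHook (sqNoStep_of_snd (by simp) hs) (HookPair.pos h1)
          (w₁ := w₁ ++ [((c - (p-1)) - (p-1), true)]) (w₂ := v₂) (by simp) (by simp)
  | @neg a b h1 =>
    cases hyz with
    | @neg _ c h2 =>
      refine ⟨w₁ ++ (c, false) :: (b - (p-1), false) :: ((a - (p-1)) - (p-1), false) :: v₂,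
        ReflTransGen.head
          (b := w₁ ++ (b, false) :: (c, false) :: ((a - (p-1)) - (p-1), false) :: v₂)
          ?_ (.single ?_),
        ReflTransGen.head
          (b := w₁ ++ (c, false) :: (a - (p-1), false) :: (b - (p-1), false) :: v₂)
          ?_ (.single ?_)⟩
      · exact mkHook (sqNoStep_of_snd (by simp) hs)
          (HookPair.neg (show c + (p-1) < a - (p-1) by omega))
          (w₁ := w₁ ++ [(b, false)]) (w₂ := v₂) (by simp) (by simp)
      · exact mkHook (sqNoStep_of_snd (by simp) hs)
          (HookPair.neg h2) (w₁ := w₁) (w₂ := ((a - (p-1)) - (p-1), false) :: v₂) (by simp) (by simp)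
      · exact mkHook (sqNoStep_of_snd (by simp) hs)
          (HookPair.neg (show c + (p-1) < a by omega)) (w₁ := w₁)
          (w₂ := (b - (p-1), false) :: v₂) (by simp) (by simp)
      · exact mkHook (sqNoStep_of_snd (by simp) hs)
          (HookPair.neg (show (b - (p-1)) + (p-1) < a - (p-1) by omega))
          (w₁ := w₁ ++ [(c, false)]) (w₂ := v₂) (by simp) (by simp)

theorem hook_lc (w a b : List Letter) (ha : Hook p w a) (hb : Hook p w b) :
    ∃ c, ReflTransGen (Hook p) a c ∧ ReflTransGen (Hook p) b c := by
  obtain ⟨hs, w₁, w₂, x, y, x', y', hxy, he0, rfl⟩ := ha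
  obtain ⟨-, v₁, v₂, u, v, u', v', huv, he1, rfl⟩ := hb
  subst he0
  rcases two_decomp w₁ x y w₂ v₁ u v v₂ he1 with
    ⟨h1, h2, h3, h4⟩ | ⟨h1, h2, h3⟩ | ⟨h1, h2, h3⟩ | ⟨m, h1, h2⟩ | ⟨m, h1, h2⟩
  · subst h1; subst h2; subst h3; subst h4
    obtain ⟨rfl, rfl⟩ := hookPair_fun hxy huv
    exact ⟨_, .refl, .refl⟩
  · -- overlap, second redex to the right
    subst h2; subst h3; subst h1
    obtain ⟨c, hc1, hc2⟩ := hook_overlap hs hxy huv (w₁ := w₁) (v₂ := v₂) (by simp)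
    exact ⟨c, hc1, by simpa using hc2⟩
  · -- overlap, second redex to the left
    subst h2; subst h3; subst h1
    obtain ⟨c, hc1, hc2⟩ := hook_overlap hs huv hxy (w₁ := v₁) (v₂ := w₂) (by simp)
    exact ⟨c, by simpa using hc2, hc1⟩
  · subst h1; subst h2
    refine ⟨w₁ ++ x' :: y' :: (m ++ u' :: v' :: v₂), .single ?_, .single ?_⟩
    · exact mkHook (sqNoStep_of_snd (by simp [(hookPair_snd hxy).1, (hookPair_snd hxy).2.1]) hs)
        huv (w₁ := w₁ ++ x' :: y' :: m) (w₂ := v₂) (by simp) (by simp)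
    · exact mkHook (sqNoStep_of_snd (by simp [(hookPair_snd huv).1, (hookPair_snd huv).2.1]) hs)
        hxy (w₁ := w₁) (w₂ := m ++ u' :: v' :: v₂) (by simp) (by simp)
  · subst h1; subst h2
    refine ⟨v₁ ++ u' :: v' :: (m ++ x' :: y' :: w₂), .single ?_, .single ?_⟩
    · exact mkHook (sqNoStep_of_snd (by simp [(hookPair_snd hxy).1, (hookPair_snd hxy).2.1]) hs)
        huv (w₁ := v₁) (w₂ := m ++ x' :: y' :: w₂) (by simp) (by simp)
    · exact mkHook (sqNoStep_of_snd (by simp [(hookPair_snd huv).1, (hookPair_snd huv).2.1]) hs)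
        hxy (w₁ := v₁ ++ u' :: v' :: m) (w₂ := w₂) (by simp) (by simp)

end BTaux3
-- chunk 4: nf existence/uniqueness, eval invariance
section BTaux4
open Relation List

variable {p : ℕ}

theorem rtg_of_nf {α : Type*} {R : α → α → Prop} {u c : α} (h : ReflTransGen R u c)
    (hu : ∀ v, ¬ R u v) : u = c := by
  rcases h.cases_head with rfl | ⟨v, hv, -⟩
  · rfl
  · exact absurd hv (hu v)

theorem squig_wf (hp : 2 ≤ p) : WellFounded (fun a b => Squig p b a) :=
  Subrelation.wf (fun h => Or.inl h) (step_wf hp)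

theorem hook_wf (hp : 2 ≤ p) : WellFounded (fun a b => Hook p b a) :=
  Subrelation.wf (fun h => Or.inr h) (step_wf hp)

theorem exists_sq_nf (hp : 2 ≤ p) (w : List Letter) :
    ∃ u, ReflTransGen (Squig p) w u ∧ ∀ v, ¬ Squig p u v := by
  induction w using (squig_wf hp).induction with
  | _ w ih =>
    by_cases h : ∃ u, Squig p w u
    · obtain ⟨u, hu⟩ := h
      obtain ⟨v, hv1, hv2⟩ := ih u hu
      exact ⟨v, .head hu hv1, hv2⟩
    · push_neg at h
      exact ⟨w, .refl, h⟩

theorem exists_hk_nf (hp : 2 ≤ p) :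
    ∀ w : List Letter, (∀ v, ¬ Squig p w v) →
      ∃ u, ReflTransGen (Hook p) w u ∧ (∀ v, ¬ Squig p u v) ∧ ∀ v, ¬ Hook p u v := by
  intro w
  induction w using (hook_wf hp).induction with
  | _ w ih =>
    intro hw
    by_cases h : ∃ u, Hook p w u
    · obtain ⟨u, hu⟩ := h
      have hu' : ∀ v, ¬ Squig p u v := sqNoStep_of_snd (hook_measures hu).2.2.2 hw
      obtain ⟨v, h1, h2, h3⟩ := ih u hu hu'
      exact ⟨v, .head hu h1, h2, h3⟩
    · push_neg at h
      exact ⟨w, .refl, hw, h⟩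

theorem sq_nf_unique (hp : 2 ≤ p) {w u u' : List Letter}
    (h1 : ReflTransGen (Squig p) w u) (h2 : ReflTransGen (Squig p) w u')
    (n1 : ∀ v, ¬ Squig p u v) (n2 : ∀ v, ¬ Squig p u' v) : u = u' := by
  obtain ⟨c, hc1, hc2⟩ := newman (squig_wf hp) squig_lc w u u' h1 h2
  exact (rtg_of_nf hc1 n1).trans (rtg_of_nf hc2 n2).symm

theorem stepTo_join (hp : 2 ≤ p) {w a N : List Letter} (ha : StepTo p w a)
    (hN : StepTo p w N) (hNF : IsNF p N) : StepTo p a N := by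
  obtain ⟨t, ht1, ht2⟩ := hN
  have htS : ∀ v, ¬ Squig p t v := by
    rcases ht2.cases_head with rfl | ⟨m, hm, -⟩
    · exact hNF.1
    · exact hm.1
  obtain ⟨s, hs1, hs2⟩ := ha
  rcases hs2.cases_head with rfl | ⟨m, hm, -⟩
  · obtain ⟨c, hc1, hc2⟩ := newman (squig_wf hp) squig_lc w _ t hs1 ht1
    have hct : c = t := (rtg_of_nf hc2 htS).symm
    exact ⟨t, hct ▸ hc1, ht2⟩
  · have hsS : ∀ v, ¬ Squig p s v := hm.1
    have hst : s = t := sq_nf_unique hp hs1 ht1 hsS htS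
    subst hst
    obtain ⟨c, hc1, hc2⟩ := newman (hook_wf hp) hook_lc s a N hs2 ht2
    have hcN : c = N := (rtg_of_nf hc2 hNF.2).symm
    exact ⟨a, .refl, hcN ▸ hc1⟩

theorem stepTo_nf_nf {u N : List Letter} (hu : IsNF p u) (h : StepTo p u N) : u = N := by
  obtain ⟨s, h1, h2⟩ := h
  have hus : u = s := rtg_of_nf h1 hu.1
  subst hus
  exact rtg_of_nf h2 hu.2

theorem exists_nf (hp : 2 ≤ p) (w : List Letter) : ∃ u, StepTo p w u ∧ IsNF p u := by
  obtain ⟨s, hs1, hs2⟩ := exists_sq_nf hp w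
  obtain ⟨u, hu1, hu2, hu3⟩ := exists_hk_nf hp s hs2
  exact ⟨u, ⟨s, hs1, hu1⟩, hu2, hu3⟩

/-! eval invariance -/

theorem xg_rel {m k : ℕ} (h : k < m) :
    xg p m * xg p k = xg p k * xg p (m + (p - 1)) := by
  have hmem : FreeGroup.of m * FreeGroup.of k *
      (FreeGroup.of k * FreeGroup.of (m + (p - 1)))⁻¹ ∈
      Subgroup.normalClosure (brownRels p) :=
    Subgroup.subset_normalClosure ⟨m, k, h, rfl⟩
  have h1 : (PresentedGroup.mk (brownRels p)) (FreeGroup.of m * FreeGroup.of k *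
      (FreeGroup.of k * FreeGroup.of (m + (p - 1)))⁻¹) = 1 := by
    exact (QuotientGroup.eq_one_iff _).mpr hmem
  rw [map_mul, map_inv, map_mul, map_mul] at h1
  have h2 := mul_inv_eq_one.mp h1
  exact h2

theorem evalL_append (xs ys : List Letter) :
    evalL p (xs ++ ys) = evalL p xs * evalL p ys := by
  simp [evalL]

theorem squigPair_eval {x y x' y' : Letter} (h : SquigPair p x y x' y') :
    evalL p [x', y'] = evalL p [x, y] := by
  cases h with
  | @gt a b hab =>
    simp only [evalL, List.map, List.prod_cons, List.prod_nil, mul_one, if_true, if_false,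
      Bool.false_eq_true, ite_false, ite_true]
    have h1 := xg_rel (p := p) hab
    rw [mul_inv_eq_iff_eq_mul, mul_assoc, ← h1, ← mul_assoc, inv_mul_cancel, one_mul]
  | @lt a b hab =>
    simp only [evalL, List.map, List.prod_cons, List.prod_nil, mul_one, if_true, if_false,
      Bool.false_eq_true, ite_false, ite_true]
    have h1 := xg_rel (p := p) hab
    rw [mul_inv_eq_iff_eq_mul, mul_assoc, h1, ← mul_assoc, inv_mul_cancel, one_mul]
  | @eq a =>
    simp only [evalL, List.map, List.prod_cons, List.prod_nil, mul_one, if_true, if_false,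
      Bool.false_eq_true, ite_false, ite_true]
    rw [inv_mul_cancel, mul_inv_cancel]

theorem hookPair_eval {x y x' y' : Letter} (h : HookPair p x y x' y') :
    evalL p [x', y'] = evalL p [x, y] := by
  cases h with
  | @pos a b hab =>
    simp only [evalL, List.map, List.prod_cons, List.prod_nil, mul_one, ite_true]
    have h1 := xg_rel (p := p) (m := b - (p - 1)) (k := a) (by omega)
    rw [show b - (p-1) + (p-1) = b by omega] at h1
    exact h1
  | @neg a b hab =>
    simp only [evalL, List.map, List.prod_cons, List.prod_nil, mul_one, if_false,
      Bool.false_eq_true, ite_false]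
    have h1 := xg_rel (p := p) (m := a - (p - 1)) (k := b) (by omega)
    rw [show a - (p-1) + (p-1) = a by omega] at h1
    rw [← mul_inv_rev, ← mul_inv_rev, h1]
  -- goal directions may need adjusting

theorem squig_eval {w u : List Letter} (h : Squig p w u) : evalL p u = evalL p w := by
  obtain ⟨w₁, w₂, x, y, x', y', hp, rfl, rfl⟩ := h
  rw [show w₁ ++ x :: y :: w₂ = w₁ ++ [x, y] ++ w₂ by simp,
      show w₁ ++ x' :: y' :: w₂ = w₁ ++ [x', y'] ++ w₂ by simp,
      evalL_append, evalL_append, evalL_append, evalL_append, squigPair_eval hp]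

theorem hook_eval {w u : List Letter} (h : Hook p w u) : evalL p u = evalL p w := by
  obtain ⟨-, w₁, w₂, x, y, x', y', hp, rfl, rfl⟩ := h
  rw [show w₁ ++ x :: y :: w₂ = w₁ ++ [x, y] ++ w₂ by simp,
      show w₁ ++ x' :: y' :: w₂ = w₁ ++ [x', y'] ++ w₂ by simp,
      evalL_append, evalL_append, evalL_append, evalL_append, hookPair_eval hp]

theorem rtg_eval {R : List Letter → List Letter → Prop}
    (hR : ∀ a b, R a b → evalL p b = evalL p a) {w u : List Letter}
    (h : ReflTransGen R w u) : evalL p u = evalL p w := by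
  induction h with
  | refl => rfl
  | tail _ hstep ih => rw [hR _ _ hstep, ih]

theorem stepTo_eval {w u : List Letter} (h : StepTo p w u) : evalL p u = evalL p w := by
  obtain ⟨s, h1, h2⟩ := h
  rw [rtg_eval (fun _ _ hs => hook_eval hs) h2, rtg_eval (fun _ _ hs => squig_eval hs) h1]

end BTaux4
-- chunk 5: shape lemma, generic rtg length, final theorem
section BTaux5
open Relation List

variable {p : ℕ}

theorem shape_aux : ∀ (s : List Letter), List.Chain' (fun x y : Letter => y.2 ≤ x.2) s →
    ∃ r, r ≤ s.length ∧ ∀ l (h : l < s.length), (s[l]).2 = decide (l < r)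
  | [], _ => ⟨0, le_refl _, fun l h => by simp at h⟩
  | x :: t, h => by
    obtain ⟨hhd, htl⟩ := List.isChain_cons.mp h
    obtain ⟨r', hr', he⟩ := shape_aux t htl
    by_cases hx : x.2 = true
    · refine ⟨r' + 1, by simpa using hr', fun l hl => ?_⟩
      cases l with
      | zero => simpa using hx
      | succ l =>
        rw [List.getElem_cons_succ, he l (by simpa using hl)]
        exact decide_eq_decide.mpr (by omega)
    · have hx' : x.2 = false := by revert hx; cases x.2 <;> simp
      have hr0 : r' = 0 := by
        by_contra h0
        have hlt : 0 < t.length := lt_of_lt_of_le (Nat.pos_of_ne_zero h0) hr'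
        cases t with
        | nil => simp at hlt
        | cons y t' =>
          have h1 : y.2 ≤ x.2 := hhd y rfl
          have h2 := he 0 hlt
          rw [List.getElem_cons_zero] at h2
          rw [hx', h2, decide_eq_true_eq.mpr (Nat.pos_of_ne_zero h0)] at h1
          exact absurd h1 (by decide)
      refine ⟨0, Nat.zero_le _, fun l hl => ?_⟩
      cases l with
      | zero => simpa using hx'
      | succ l =>
        rw [List.getElem_cons_succ, he l (by simpa using hl), hr0]
        simp

theorem rtg_length {R : List Letter → List Letter → Prop}
    (hR : ∀ a b, R a b → List.length b = List.length a) {w u : List Letter}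
    (h : ReflTransGen R w u) : u.length = w.length := by
  induction h with
  | refl => rfl
  | tail _ hstep ih => rw [hR _ _ hstep, ih]

theorem stepTo_length {w u : List Letter} (h : StepTo p w u) : u.length = w.length := by
  obtain ⟨s, h1, h2⟩ := h
  rw [rtg_length (fun _ _ hs => hook_length hs) h2,
      rtg_length (fun _ _ hs => squig_length hs) h1]

end BTaux5


/-- The combined rewriting system is terminating and confluent, and every word
`w = (i, ε)` of length `d` has a unique normal form, of the shape
`(x_{j 0}, …, x_{j (r-1)}, x_{j r}⁻¹, …, x_{j (d-1)}⁻¹)` with the same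
evaluation, `j (l+1) ≤ j l + (p-1)` on the positive part and
`j l ≤ j (l+1) + (p-1)` on the negative part. -/
theorem rewriting_terminating_confluent_unique_nf
    (p : ℕ) (hp : 2 ≤ p) (d : ℕ) (hd : 1 ≤ d) :
    -- termination of the one-step rewriting
    (WellFounded fun a b : List Letter => Squig p b a ∨ Hook p b a) ∧
    -- confluence of `→`
    (∀ w a b : List Letter, StepTo p w a → StepTo p w b →
        ∃ c, StepTo p a c ∧ StepTo p b c) ∧
    -- existence, shape and uniqueness of the normal form
    (∀ (i : Fin d → ℕ) (ε : Fin d → Bool),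
      ∃ (r : ℕ) (j : ℕ → ℕ) (w' : List Letter),
        r ≤ d ∧
        w' = (List.range d).map (fun l => (j l, decide (l < r))) ∧
        StepTo p (mkW d i ε) w' ∧ IsNF p w' ∧
        evalL p w' = evalL p (mkW d i ε) ∧
        (∀ l, l + 1 < r → j (l + 1) ≤ j l + (p - 1)) ∧
        (∀ l, r ≤ l → l + 1 < d → j l ≤ j (l + 1) + (p - 1)) ∧
        (∀ u, StepTo p (mkW d i ε) u → IsNF p u → u = w')) := by
  refine ⟨step_wf hp, ?_, ?_⟩
  · intro w a b ha hb
    obtain ⟨N, hN, hNF⟩ := exists_nf hp w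
    exact ⟨N, stepTo_join hp ha hN hNF, stepTo_join hp hb hN hNF⟩
  · intro i ε
    obtain ⟨w', hw', hNF⟩ := exists_nf hp (mkW d i ε)
    have hlen : w'.length = d := by
      rw [stepTo_length hw']; simp [mkW]
    have hSqI : SqI w' := (sqI_iff w').mp hNF.1
    have hchain : List.Chain' (hkOK p) w' := (hkI_iff hNF.1).mp hNF.2
    obtain ⟨r, hr, hsig⟩ := shape_aux w' hSqI
    have hrd : r ≤ d := hlen ▸ hr
    set j : ℕ → ℕ := fun l => (w'.getD l ((0 : ℕ), true)).1 with hj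
    have hje : ∀ (l : ℕ) (h : l < w'.length), j l = (w'[l]'h).1 := by
      intro l h; simp [hj, List.getElem?_eq_getElem h]
    refine ⟨r, j, w', hrd, ?_, hw', hNF, stepTo_eval hw', ?_, ?_, ?_⟩
    · apply List.ext_getElem
      · simp [hlen]
      · intro l h1 h2
        have hlw : l < w'.length := h1
        rw [List.getElem_map, List.getElem_range]
        exact Prod.ext (hje l hlw).symm (hsig l hlw)
    · intro l hl
      have hl1 : l + 1 < w'.length := by omega
      have hl0 : l < w'.length := by omega
      have hcl := List.isChain_iff_getElem.mp hchain l (by omega)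
      have s1 : (w'[l]'hl0).2 = true := by rw [hsig l hl0]; exact decide_eq_true (by omega)
      have s2 : (w'[l+1]'hl1).2 = true := by rw [hsig (l+1) hl1]; exact decide_eq_true (by omega)
      by_contra hlt
      rw [hje l hl0, hje (l+1) hl1] at hlt
      exact hcl (Or.inl ⟨s1, s2, by omega⟩)
    · intro l hrl hld
      have hl1 : l + 1 < w'.length := by omega
      have hl0 : l < w'.length := by omega
      have hcl := List.isChain_iff_getElem.mp hchain l (by omega)
      have s1 : (w'[l]'hl0).2 = false := by rw [hsig l hl0]; exact decide_eq_false (by omega)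
      have s2 : (w'[l+1]'hl1).2 = false := by rw [hsig (l+1) hl1]; exact decide_eq_false (by omega)
      by_contra hlt
      rw [hje l hl0, hje (l+1) hl1] at hlt
      exact hcl (Or.inr ⟨s1, s2, by omega⟩)
    · intro u hu hnu
      exact stepTo_nf_nf hnu (stepTo_join hp hu hw' hNF)
end

section
/- Let p ≥ 2, let w = (i, ε) ∈ W(d) and let i_0 := min{ i(l) : l ∈ {1, …, d} }. The rewriting relation ⇀ on W(d) (which pushes the letters x_{i_0} to the left and the letters x_{i_0}^{−1} to the right) is terminating and locally confluent; hence every word w ∈ W(d) has a unique ⇀-normal form, and this normal form has the shape x_{i_0}^r · w̃ · x_{i_0}^{−r'} for some r, r' ∈ ℕ and some word w̃ in which no letter has index i_0. -/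
/-- A single `⇀`-replacement on an adjacent pair, for minimal index `i₀`:
`(x_a^δ, x_{i₀}) ⇀ (x_{i₀}, x_{a+p-1}^δ)` and
`(x_{i₀}⁻¹, x_a^δ) ⇀ (x_{a+p-1}^δ, x_{i₀}⁻¹)` for `a > i₀`, and
`(x_{i₀}⁻¹, x_{i₀}) ⇀ (x_{i₀}, x_{i₀}⁻¹)`. -/
inductive HarpPair (p i₀ : ℕ) : Letter → Letter → Letter → Letter → Prop
  | moveLeft {a : ℕ} {δ : Bool} (h : i₀ < a) :
      HarpPair p i₀ (a, δ) (i₀, true) (i₀, true) (a + (p - 1), δ)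
  | moveRight {a : ℕ} {δ : Bool} (h : i₀ < a) :
      HarpPair p i₀ (i₀, false) (a, δ) (a + (p - 1), δ) (i₀, false)
  | swap :
      HarpPair p i₀ (i₀, false) (i₀, true) (i₀, true) (i₀, false)

/-- One step of the relation `⇀`. -/
def Harp (p i₀ : ℕ) (w w' : List Letter) : Prop :=
  ∃ (w₁ w₂ : List Letter) (l₁ l₂ l₁' l₂' : Letter),
    HarpPair p i₀ l₁ l₂ l₁' l₂' ∧ w = w₁ ++ l₁ :: l₂ :: w₂ ∧ w' = w₁ ++ l₁' :: l₂' :: w₂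

namespace HarpAux

/-- Cost of a letter at position `k` in a word of length `n`. -/
def cost (i₀ n k : ℕ) (l : Letter) : ℕ :=
  if l = (i₀, true) then k else if l.1 = i₀ then n - 1 - k else 0

/-- Sum of costs of letters, starting at position `k`. -/
def meas (i₀ n : ℕ) : ℕ → List Letter → ℕ
  | _, [] => 0
  | k, l :: rest => cost i₀ n k l + meas i₀ n (k + 1) rest

lemma meas_cons (i₀ n k : ℕ) (l : Letter) (rest : List Letter) :
    meas i₀ n k (l :: rest) = cost i₀ n k l + meas i₀ n (k + 1) rest := rfl

lemma meas_append (i₀ n : ℕ) (u v : List Letter) (k : ℕ) :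
    meas i₀ n k (u ++ v) = meas i₀ n k u + meas i₀ n (k + u.length) v := by
  induction u generalizing k with
  | nil => simp [meas]
  | cons l u ih =>
    rw [List.cons_append, List.length_cons, meas_cons, meas_cons, ih,
      show k + (u.length + 1) = k + 1 + u.length by omega]
    omega

lemma cost_other {i₀ : ℕ} {l : Letter} (h : l.1 ≠ i₀) (n k : ℕ) : cost i₀ n k l = 0 := by
  unfold cost
  rw [if_neg, if_neg h]
  rintro rfl
  exact h rfl

lemma cost_pos (i₀ n k : ℕ) : cost i₀ n k (i₀, true) = k := by simp [cost]

lemma cost_neg (i₀ n k : ℕ) : cost i₀ n k (i₀, false) = n - 1 - k := by simp [cost]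

lemma harp_length {p i₀ : ℕ} {w w' : List Letter} (h : Harp p i₀ w w') :
    w'.length = w.length := by
  obtain ⟨w₁, w₂, l₁, l₂, l₁', l₂', hp, rfl, rfl⟩ := h
  simp

lemma cost_key {p i₀ : ℕ} {l₁ l₂ l₁' l₂' : Letter} (hp : HarpPair p i₀ l₁ l₂ l₁' l₂')
    (n m : ℕ) (hmn : m + 2 ≤ n) :
    cost i₀ n m l₁' + cost i₀ n (m + 1) l₂' < cost i₀ n m l₁ + cost i₀ n (m + 1) l₂ := by
  cases hp with
  | @moveLeft a δ h =>
    rw [cost_other (l := (a + (p - 1), δ)) (show a + (p - 1) ≠ i₀ by omega),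
      cost_other (l := (a, δ)) (show a ≠ i₀ by omega)]
    simp only [cost_pos]
    omega
  | @moveRight a δ h =>
    rw [cost_other (l := (a + (p - 1), δ)) (show a + (p - 1) ≠ i₀ by omega),
      cost_other (l := (a, δ)) (show a ≠ i₀ by omega)]
    simp only [cost_neg]
    omega
  | swap =>
    simp only [cost_pos, cost_neg]
    omega

lemma harp_meas {p i₀ : ℕ} {w w' : List Letter} (h : Harp p i₀ w w') :
    meas i₀ w.length 0 w' < meas i₀ w.length 0 w := by
  obtain ⟨w₁, w₂, l₁, l₂, l₁', l₂', hp, rfl, rfl⟩ := h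
  set n := (w₁ ++ l₁ :: l₂ :: w₂).length with hn
  have hn' : n = w₁.length + 2 + w₂.length := by simp [hn]; omega
  rw [meas_append, meas_append]
  simp only [meas_cons, Nat.zero_add]
  have key := cost_key hp n w₁.length (by omega)
  omega

lemma harp_wf (p i₀ : ℕ) : WellFounded fun a b : List Letter => Harp p i₀ b a := by
  refine Subrelation.wf (r := InvImage (· < ·) fun u : List Letter => meas i₀ u.length 0 u)
    ?_ (InvImage.wf _ Nat.lt_wfRel.wf)
  intro a b h
  have h1 := harp_meas h
  have h2 := harp_length h
  simpa [InvImage, h2] using h1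

lemma harp_step {p i₀ : ℕ} (w₁ w₂ : List Letter) {l₁ l₂ l₁' l₂' : Letter}
    (h : HarpPair p i₀ l₁ l₂ l₁' l₂') :
    Harp p i₀ (w₁ ++ l₁ :: l₂ :: w₂) (w₁ ++ l₁' :: l₂' :: w₂) :=
  ⟨w₁, w₂, l₁, l₂, l₁', l₂', h, rfl, rfl⟩

lemma harpPair_det {p i₀ : ℕ} {l₁ l₂ a b a' b' : Letter}
    (h : HarpPair p i₀ l₁ l₂ a b) (h' : HarpPair p i₀ l₁ l₂ a' b') : a = a' ∧ b = b' := by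
  cases h <;> cases h' <;> simp_all

lemma conf_aux {p i₀ : ℕ} (w₁ : List Letter) {w₂ u₂ : List Letter} (s : List Letter)
    {l₁ l₂ l₁' l₂' m₁ m₂ m₁' m₂' : Letter}
    (h1 : HarpPair p i₀ l₁ l₂ l₁' l₂') (h2 : HarpPair p i₀ m₁ m₂ m₁' m₂')
    (hs : l₁ :: l₂ :: w₂ = s ++ m₁ :: m₂ :: u₂) :
    ∃ c, Relation.ReflTransGen (Harp p i₀) (w₁ ++ l₁' :: l₂' :: w₂) c ∧
         Relation.ReflTransGen (Harp p i₀) ((w₁ ++ s) ++ m₁' :: m₂' :: u₂) c := by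
  obtain _ | ⟨x, _ | ⟨y, s'⟩⟩ := s
  · -- same redex
    simp only [List.nil_append] at hs
    injection hs with e1 hs
    injection hs with e2 e3
    subst e1; subst e2; subst e3
    obtain ⟨rfl, rfl⟩ := harpPair_det h1 h2
    refine ⟨_, .refl, ?_⟩
    simp only [List.nil_append, List.append_nil]
    exact Relation.ReflTransGen.refl
  · -- overlapping redexes: the critical pair
    simp only [List.cons_append, List.nil_append] at hs
    injection hs with e1 hs
    injection hs with e2 e3
    subst e1; subst e2; subst e3
    cases h1 with
    | @moveLeft a δ h =>
      cases h2 with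
      | moveLeft h' => exact absurd h' (lt_irrefl i₀)
    | swap =>
      cases h2 with
      | moveLeft h' => exact absurd h' (lt_irrefl i₀)
    | @moveRight a δ h =>
      cases h2 with
      | moveRight h' => exact absurd h (lt_irrefl i₀)
      | swap => exact absurd h (lt_irrefl i₀)
      | moveLeft h' =>
        refine ⟨w₁ ++ (i₀, true) :: (a + (p - 1) + (p - 1), δ) :: (i₀, false) :: u₂, ?_, ?_⟩
        · refine Relation.ReflTransGen.head
            (b := w₁ ++ (a + (p - 1), δ) :: (i₀, true) :: (i₀, false) :: u₂)
            ?_ (Relation.ReflTransGen.single ?_)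
          · have := harp_step (p := p) (w₁ ++ [(a + (p - 1), δ)]) u₂ (HarpPair.swap (p := p) (i₀ := i₀))
            simpa using this
          · have := harp_step (p := p) w₁ ((i₀, false) :: u₂)
              (HarpPair.moveLeft (p := p) (a := a + (p - 1)) (δ := δ) (i₀ := i₀) (by omega))
            simpa using this
        · refine Relation.ReflTransGen.head
            (b := w₁ ++ (i₀, true) :: (i₀, false) :: (a + (p - 1), δ) :: u₂)
            ?_ (Relation.ReflTransGen.single ?_)
          · have := harp_step (p := p) w₁ ((a + (p - 1), δ) :: u₂) (HarpPair.swap (p := p) (i₀ := i₀))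
            simpa using this
          · have := harp_step (p := p) (w₁ ++ [(i₀, true)]) u₂
              (HarpPair.moveRight (p := p) (a := a + (p - 1)) (δ := δ) (i₀ := i₀) (by omega))
            simpa using this
  · -- disjoint redexes
    simp only [List.cons_append] at hs
    injection hs with e1 hs
    injection hs with e2 e3
    subst e1; subst e2; subst e3
    refine ⟨w₁ ++ l₁' :: l₂' :: (s' ++ m₁' :: m₂' :: u₂), ?_, ?_⟩
    · refine Relation.ReflTransGen.single ?_
      have := harp_step (p := p) (w₁ ++ l₁' :: l₂' :: s') u₂ h2
      simpa using this
    · refine Relation.ReflTransGen.single ?_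
      have := harp_step (p := p) w₁ (s' ++ m₁' :: m₂' :: u₂) h1
      simpa using this

lemma harp_locConf (p i₀ : ℕ) :
    ∀ v a b : List Letter, Harp p i₀ v a → Harp p i₀ v b →
      ∃ c, Relation.ReflTransGen (Harp p i₀) a c ∧
           Relation.ReflTransGen (Harp p i₀) b c := by
  rintro v a b ⟨w₁, w₂, l₁, l₂, l₁', l₂', h1, rfl, rfl⟩
    ⟨u₁, u₂, m₁, m₂, m₁', m₂', h2, heq, rfl⟩
  rcases List.append_eq_append_iff.mp heq with ⟨s, rfl, hs⟩ | ⟨s, rfl, hs⟩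
  · exact conf_aux w₁ s h1 h2 hs
  · obtain ⟨c, hc1, hc2⟩ := conf_aux u₁ s h2 h1 hs
    exact ⟨c, hc2, hc1⟩

lemma exists_nf (p i₀ : ℕ) (w : List Letter) :
    ∃ u, Relation.ReflTransGen (Harp p i₀) w u ∧ ∀ v, ¬ Harp p i₀ u v := by
  induction w using (harp_wf p i₀).induction with
  | _ w ih =>
    by_cases h : ∃ v, Harp p i₀ w v
    · obtain ⟨v, hv⟩ := h
      obtain ⟨u, h1, h2⟩ := ih v hv
      exact ⟨u, .head hv h1, h2⟩
    · exact ⟨w, .refl, fun v hv => h ⟨v, hv⟩⟩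

lemma newman (p i₀ : ℕ) :
    ∀ a b c : List Letter, Relation.ReflTransGen (Harp p i₀) a b →
      Relation.ReflTransGen (Harp p i₀) a c →
      ∃ d, Relation.ReflTransGen (Harp p i₀) b d ∧ Relation.ReflTransGen (Harp p i₀) c d := by
  intro a
  induction a using (harp_wf p i₀).induction with
  | _ a ih =>
    intro b c hab hac
    rcases hab.cases_head with rfl | ⟨a₁, ha1, h1b⟩
    · exact ⟨c, hac, .refl⟩
    rcases hac.cases_head with rfl | ⟨a₂, ha2, h2c⟩
    · exact ⟨b, .refl, .head ha1 h1b⟩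
    obtain ⟨e, he1, he2⟩ := harp_locConf p i₀ a a₁ a₂ ha1 ha2
    obtain ⟨f, hbf, hef⟩ := ih a₁ ha1 b e h1b he1
    obtain ⟨d, hfd, hcd⟩ := ih a₂ ha2 f c (he2.trans hef) h2c
    exact ⟨d, hbf.trans hfd, hcd⟩

lemma rtg_nf {p i₀ : ℕ} {u c : List Letter}
    (h : Relation.ReflTransGen (Harp p i₀) u c) (hnf : ∀ v, ¬ Harp p i₀ u v) : u = c := by
  rcases h.cases_head with rfl | ⟨x, hx, _⟩
  · rfl
  · exact absurd hx (hnf x)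

lemma nf_tail {p i₀ : ℕ} {l : Letter} {u : List Letter}
    (h : ∀ v, ¬ Harp p i₀ (l :: u) v) : ∀ v, ¬ Harp p i₀ u v := by
  rintro v ⟨w₁, w₂, l₁, l₂, l₁', l₂', hp, rfl, rfl⟩
  exact h _ ⟨l :: w₁, w₂, l₁, l₂, l₁', l₂', hp, rfl, rfl⟩

lemma nf_head {p i₀ : ℕ} {l₁ l₂ : Letter} {u : List Letter}
    (h : ∀ v, ¬ Harp p i₀ (l₁ :: l₂ :: u) v) {a b : Letter}
    (hp : HarpPair p i₀ l₁ l₂ a b) : False :=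
  h _ ⟨[], u, l₁, l₂, a, b, hp, rfl, rfl⟩

lemma min_step {p i₀ : ℕ} {w w' : List Letter} (h : Harp p i₀ w w')
    (hm : ∀ l ∈ w, i₀ ≤ l.1) : ∀ l ∈ w', i₀ ≤ l.1 := by
  obtain ⟨w₁, w₂, l₁, l₂, l₁', l₂', hp, rfl, rfl⟩ := h
  intro l hl
  simp only [List.mem_append, List.mem_cons] at hl
  rcases hl with h' | rfl | rfl | h'
  · exact hm l (by simp [h'])
  · cases hp <;> simp <;> omega
  · cases hp <;> simp <;> omega
  · exact hm l (by simp [h'])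

lemma min_rtg {p i₀ : ℕ} {w w' : List Letter}
    (h : Relation.ReflTransGen (Harp p i₀) w w')
    (hm : ∀ l ∈ w, i₀ ≤ l.1) : ∀ l ∈ w', i₀ ≤ l.1 := by
  induction h with
  | refl => exact hm
  | tail _ hstep ih => exact min_step hstep ih

lemma all_false {p i₀ : ℕ} (u : List Letter) (h : ∀ v, ¬ Harp p i₀ ((i₀, false) :: u) v)
    (hm : ∀ l ∈ u, i₀ ≤ l.1) : u = List.replicate u.length (i₀, false) := by
  induction u with
  | nil => rfl
  | cons l u ih =>
    obtain ⟨j, δ⟩ := l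
    have hj : i₀ ≤ j := hm _ List.mem_cons_self
    rcases eq_or_lt_of_le hj with rfl | hlt
    · cases δ
      · have := ih (nf_tail h) (fun l hl => hm l (List.mem_cons_of_mem _ hl))
        simp only [List.length_cons, List.replicate_succ]
        exact congrArg _ this
      · exact (nf_head h HarpPair.swap).elim
    · exact (nf_head h (HarpPair.moveRight hlt)).elim

lemma shape {p i₀ : ℕ} (u : List Letter) (h : ∀ v, ¬ Harp p i₀ u v)
    (hm : ∀ l ∈ u, i₀ ≤ l.1) :
    ∃ (r r' : ℕ) (wt : List Letter),
      u = List.replicate r (i₀, true) ++ wt ++ List.replicate r' (i₀, false) ∧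
      ∀ l ∈ wt, l.1 ≠ i₀ := by
  induction u with
  | nil => exact ⟨0, 0, [], rfl, by simp⟩
  | cons l u ih =>
    obtain ⟨j, δ⟩ := l
    have hj : i₀ ≤ j := hm _ List.mem_cons_self
    rcases eq_or_lt_of_le hj with rfl | hlt
    · cases δ
      · have hu := all_false u h (fun l hl => hm l (List.mem_cons_of_mem _ hl))
        refine ⟨0, u.length + 1, [], ?_, by simp⟩
        have : (i₀, false) :: u = List.replicate (u.length + 1) (i₀, false) := by
          rw [List.replicate_succ]; exact congrArg _ hu
        simp [this]
      · obtain ⟨r, r', wt, hu, hwt⟩ := ih (nf_tail h) (fun l hl => hm l (List.mem_cons_of_mem _ hl))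
        exact ⟨r + 1, r', wt, by simp [hu, List.replicate_succ], hwt⟩
    · obtain ⟨r, r', wt, hu, hwt⟩ := ih (nf_tail h) (fun l hl => hm l (List.mem_cons_of_mem _ hl))
      cases r with
      | zero =>
        refine ⟨0, r', (j, δ) :: wt, by simp_all, ?_⟩
        rintro l hl
        rcases List.mem_cons.mp hl with rfl | hl
        · exact Nat.ne_of_gt hlt
        · exact hwt l hl
      | succ r =>
        rw [List.replicate_succ, List.cons_append, List.cons_append] at hu
        subst hu
        exact (nf_head h (HarpPair.moveLeft hlt)).elim

end HarpAux

/-- The relation `⇀` is terminating and locally confluent; every word of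
length `d` whose minimal index is `i₀` has a unique `⇀`-normal form, and this
normal form has the shape `x_{i₀}^r · w̃ · x_{i₀}^{-r'}` with no letter of `w̃`
of index `i₀`. -/
theorem harpoon_terminating_locally_confluent_unique_nf
    (p : ℕ) (hp : 2 ≤ p) (d : ℕ) (w : List Letter) (hw : w.length = d)
    (i₀ : ℕ) (hmem : ∃ l ∈ w, l.1 = i₀) (hmin : ∀ l ∈ w, i₀ ≤ l.1) :
    -- termination
    (WellFounded fun a b : List Letter => Harp p i₀ b a) ∧
    -- local confluence
    (∀ v a b : List Letter, Harp p i₀ v a → Harp p i₀ v b →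
      ∃ c, Relation.ReflTransGen (Harp p i₀) a c ∧
           Relation.ReflTransGen (Harp p i₀) b c) ∧
    -- unique normal form, with the shape `x_{i₀}^r · w̃ · x_{i₀}^{-r'}`
    (∃ u : List Letter,
      Relation.ReflTransGen (Harp p i₀) w u ∧ (∀ v, ¬ Harp p i₀ u v) ∧
      (∀ u', Relation.ReflTransGen (Harp p i₀) w u' → (∀ v, ¬ Harp p i₀ u' v) → u' = u) ∧
      ∃ (r r' : ℕ) (wt : List Letter),
        u = List.replicate r (i₀, true) ++ wt ++ List.replicate r' (i₀, false) ∧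
        ∀ l ∈ wt, l.1 ≠ i₀) := by
  refine ⟨HarpAux.harp_wf p i₀, HarpAux.harp_locConf p i₀, ?_⟩
  obtain ⟨u, hwu, hnf⟩ := HarpAux.exists_nf p i₀ w
  refine ⟨u, hwu, hnf, ?_, ?_⟩
  · intro u' hwu' hnf'
    obtain ⟨c, h1, h2⟩ := HarpAux.newman p i₀ w u' u hwu' hwu
    rw [HarpAux.rtg_nf h1 hnf', HarpAux.rtg_nf h2 hnf]
  · exact HarpAux.shape u hnf (HarpAux.min_rtg hwu hmin)
end

section
/- Let φ : F → F be the shift endomorphism of Thompson's group F determined by φ(y_i) = y_{i+1} for all i ≥ 0 (this assignment preserves the defining relations, hence defines a group endomorphism). Then for every g ∈ F, g belongs to the oriented subgroup F⃗ if and only if φ(g) belongs to F⃗. -/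
/-- Relators of Thompson's group `F`:
`yₙ yₖ = yₖ y_{n+1}` for `k < n`. -/
def thompsonRels : Set (FreeGroup ℕ) :=
  { r | ∃ m k : ℕ, k < m ∧
      r = FreeGroup.of m * FreeGroup.of k *
        (FreeGroup.of k * FreeGroup.of (m + 1))⁻¹ }

/-- Thompson's group `F`. -/
abbrev FThompson := PresentedGroup thompsonRels

/-- The standard generators `y_n` of `F`. -/
def y (n : ℕ) : FThompson := PresentedGroup.of n

/-- Jones's oriented subgroup `F⃗`: by the theorem of Golan–Sapir, it is the
subgroup generated by the elements `yᵢ y_{i+1}`. -/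
def orientedF : Subgroup FThompson :=
  Subgroup.closure {g | ∃ i : ℕ, g = y i * y (i + 1)}

namespace TAux

/-! ### Basic relations -/

lemma rel_y {k m : ℕ} (h : k < m) : y m * y k = y k * y (m + 1) := by
  have hr : (FreeGroup.of m * FreeGroup.of k *
      (FreeGroup.of k * FreeGroup.of (m + 1))⁻¹ : FreeGroup ℕ) ∈ thompsonRels :=
    ⟨m, k, h, rfl⟩
  have h1 : PresentedGroup.mk thompsonRels
      (FreeGroup.of m * FreeGroup.of k * (FreeGroup.of k * FreeGroup.of (m + 1))⁻¹) = 1 := by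
    have := Subgroup.subset_normalClosure (s := thompsonRels) hr
    exact (QuotientGroup.eq_one_iff _).2 this
  rw [map_mul, map_inv, map_mul] at h1
  have : y m * y k * (y k * y (m+1))⁻¹ = 1 := h1
  group at this ⊢
  exact mul_inv_eq_one.mp (by simpa [mul_assoc] using this)

/-- the generators of the oriented subgroup -/
def a (i : ℕ) : FThompson := y i * y (i + 1)

lemma a_comm {k n : ℕ} (h : k < n) : a n * a k = a k * a (n + 2) := by
  unfold a
  have h1 : y (n+1) * y k = y k * y (n+2) := rel_y (Nat.lt_succ_of_lt h)
  have h2 : y n * y k = y k * y (n+1) := rel_y h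
  have h3 : y (n+2) * y (k+1) = y (k+1) * y (n+3) := rel_y (by omega)
  have h4 : y (n+1) * y (k+1) = y (k+1) * y (n+2) := rel_y (by omega)
  calc y n * y (n+1) * (y k * y (k+1))
      = y n * (y (n+1) * y k) * y (k+1) := by group
    _ = y n * (y k * y (n+2)) * y (k+1) := by rw [h1]
    _ = (y n * y k) * (y (n+2) * y (k+1)) := by group
    _ = (y k * y (n+1)) * (y (k+1) * y (n+3)) := by rw [h2, h3]
    _ = y k * (y (n+1) * y (k+1)) * y (n+3) := by group
    _ = y k * (y (k+1) * y (n+2)) * y (n+3) := by rw [h4]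
    _ = y k * y (k+1) * (y (n+2) * y (n+2+1)) := by group

lemma a_mem (i : ℕ) : a i ∈ orientedF :=
  Subgroup.subset_closure ⟨i, rfl⟩

/-! ### The shift endomorphism exists -/

def phi0 : FThompson →* FThompson :=
  PresentedGroup.toGroup (f := fun i => y (i + 1)) (by
    rintro r ⟨m, k, hkm, rfl⟩
    simp only [map_mul, map_inv, FreeGroup.lift_apply_of]
    have h : y (m+1) * y (k+1) = y (k+1) * y (m+1+1) := rel_y (by omega)
    rw [h]; group)

lemma phi0_y (i : ℕ) : phi0 (y i) = y (i + 1) := by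
  simp [phi0, y, PresentedGroup.toGroup.of]

/-! ### The `y₀`-degree homomorphism -/

def pz : FThompson →* Multiplicative ℤ :=
  PresentedGroup.toGroup (f := fun i => Multiplicative.ofAdd (if i = 0 then (1 : ℤ) else 0)) (by
    rintro r ⟨m, k, hkm, rfl⟩
    simp only [map_mul, map_inv, FreeGroup.lift_apply_of]
    have hm : m ≠ 0 := by omega
    have hm1 : m + 1 ≠ 0 := by omega
    simp [hm, hm1])

lemma pz_y (i : ℕ) : pz (y i) = Multiplicative.ofAdd (if i = 0 then (1 : ℤ) else 0) := by
  simp [pz, y, PresentedGroup.toGroup.of]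

/-! ### Deep subgroups -/

def Y (k : ℕ) : Subgroup FThompson :=
  Subgroup.closure {g | ∃ i : ℕ, k ≤ i ∧ g = y i}

lemma Y_le {j k : ℕ} (h : j ≤ k) : Y k ≤ Y j :=
  Subgroup.closure_mono (by rintro g ⟨i, hi, rfl⟩; exact ⟨i, le_trans h hi, rfl⟩)

lemma y_mem_Y {k i : ℕ} (h : k ≤ i) : y i ∈ Y k :=
  Subgroup.subset_closure ⟨i, h, rfl⟩

lemma pz_Y1 {g : FThompson} (hg : g ∈ Y 1) : pz g = 1 := by
  have : Y 1 ≤ pz.ker := by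
    rw [Y, Subgroup.closure_le]
    rintro g ⟨i, hi, rfl⟩
    have : i ≠ 0 := by omega
    simp [MonoidHom.mem_ker, pz_y, this]
  simpa [MonoidHom.mem_ker] using this hg


/-! ### Lemmas about any shift endomorphism -/

section Phi
variable {φ : FThompson →* FThompson} (hφ : ∀ i : ℕ, φ (y i) = y (i + 1))
include hφ

lemma phi_a (i : ℕ) : φ (a i) = a (i + 1) := by
  simp [a, map_mul, hφ]

lemma phi_memY {k : ℕ} {g : FThompson} (hg : g ∈ Y k) : φ g ∈ Y (k + 1) := by
  induction hg using Subgroup.closure_induction with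
  | mem x hx =>
    obtain ⟨i, hi, rfl⟩ := hx
    rw [hφ]; exact y_mem_Y (by omega)
  | one => rw [map_one]; exact Subgroup.one_mem _
  | mul x y hx hy ihx ihy => rw [map_mul]; exact Subgroup.mul_mem _ ihx ihy
  | inv x hx ihx => rw [map_inv]; exact Subgroup.inv_mem _ ihx

lemma phi_mem_Y1 (g : FThompson) : φ g ∈ Y 1 := by
  have htop : g ∈ Subgroup.closure (Set.range (PresentedGroup.of : ℕ → FThompson)) := by
    rw [PresentedGroup.closure_range_of]; trivial
  induction htop using Subgroup.closure_induction with
  | mem x hx =>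
    obtain ⟨i, rfl⟩ := hx
    rw [show (PresentedGroup.of i : FThompson) = y i from rfl, hφ]
    exact y_mem_Y (by omega)
  | one => rw [map_one]; exact Subgroup.one_mem _
  | mul x y hx hy ihx ihy => rw [map_mul]; exact Subgroup.mul_mem _ ihx ihy
  | inv x hx ihx => rw [map_inv]; exact Subgroup.inv_mem _ ihx

lemma mapY (k : ℕ) : Subgroup.map φ (Y k) = Y (k + 1) := by
  rw [Y, Y, MonoidHom.map_closure]
  congr 1
  ext g
  constructor
  · rintro ⟨x, ⟨i, hi, rfl⟩, rfl⟩
    exact ⟨i + 1, by omega, hφ i⟩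
  · rintro ⟨i, hi, rfl⟩
    refine ⟨y (i - 1), ⟨i - 1, by omega, rfl⟩, ?_⟩
    rw [hφ]
    congr 1
    omega

/-- `h y₀ = y₀ φ(h)` for `h ∈ Y 1`. -/
lemma R3 {h : FThompson} (hh : h ∈ Y 1) : h * y 0 = y 0 * φ h := by
  induction hh using Subgroup.closure_induction with
  | mem x hx =>
    obtain ⟨i, hi, rfl⟩ := hx
    rw [hφ]
    exact rel_y (by omega)
  | one => simp
  | mul u v hu hv ihu ihv =>
    rw [map_mul, show u * v * y 0 = u * (v * y 0) by group, ihv,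
      show u * (y 0 * φ v) = (u * y 0) * φ v by group, ihu]
    group
  | inv u hu ihu =>
    rw [map_inv]
    have : y 0 = u⁻¹ * (u * y 0) := by group
    rw [show u⁻¹ * y 0 = u⁻¹ * (u * y 0) * (φ u)⁻¹ * (y 0)⁻¹ * y 0 by rw [ihu]; group]
    group

/-- `h a₀ = a₀ φ(φ h)` for `h ∈ Y 1`. -/
lemma R2 {h : FThompson} (hh : h ∈ Y 1) : h * a 0 = a 0 * φ (φ h) := by
  induction hh using Subgroup.closure_induction with
  | mem x hx =>
    obtain ⟨i, hi, rfl⟩ := hx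
    rw [hφ, hφ]
    show y i * (y 0 * y 1) = y 0 * y 1 * y (i + 1 + 1)
    rw [show y i * (y 0 * y 1) = (y i * y 0) * y 1 by group, rel_y (show 0 < i by omega),
      show y 0 * y (i+1) * y 1 = y 0 * (y (i+1) * y 1) by group, rel_y (show 1 < i + 1 by omega)]
    group
  | one => simp
  | mul u v hu hv ihu ihv =>
    rw [map_mul, map_mul, show u * v * a 0 = u * (v * a 0) by group, ihv,
      show u * (a 0 * φ (φ v)) = (u * a 0) * φ (φ v) by group, ihu]
    group
  | inv u hu ihu =>
    rw [map_inv, map_inv]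
    rw [show u⁻¹ * a 0 = u⁻¹ * (u * a 0) * (φ (φ u))⁻¹ * (a 0)⁻¹ * a 0 by rw [ihu]; group]
    group

end Phi

/-! ### A permutation representation on ℚ (used to separate `y₁` from `y₂`) -/

def pf (c : ℚ) : ℚ → ℚ := fun t => if t ≤ c then t else if t ≤ c + 1 then 2 * t - c else t + 1
def pg (c : ℚ) : ℚ → ℚ := fun t => if t ≤ c then t else if t ≤ c + 2 then (t + c) / 2 else t - 1

def permf (c : ℚ) : Equiv.Perm ℚ where
  toFun := pf c
  invFun := pg c
  left_inv := by intro t; unfold pf pg; split_ifs <;> linarith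
  right_inv := by intro t; unfold pf pg; split_ifs <;> linarith

lemma pf_comp {c d : ℚ} (h : c + 1 ≤ d) (t : ℚ) : pf c (pf d t) = pf (d + 1) (pf c t) := by
  unfold pf; split_ifs <;> linarith

lemma permf_rel {c d : ℚ} (h : c + 1 ≤ d) :
    permf c * permf d = permf (d + 1) * permf c := by
  ext t; exact pf_comp h t

/-- the representation of F by permutations of ℚ -/
def rho : FThompson →* Equiv.Perm ℚ :=
  PresentedGroup.toGroup (rels := thompsonRels) (f := fun i : ℕ => (permf i)⁻¹) (by
    rintro r ⟨m, k, hkm, rfl⟩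
    simp only [map_mul, map_inv, FreeGroup.lift_apply_of]
    have key : permf (k : ℚ) * permf (m : ℚ) = permf ((m : ℚ) + 1) * permf (k : ℚ) := by
      apply permf_rel
      have : (k : ℚ) + 1 ≤ (m : ℚ) := by exact_mod_cast Nat.succ_le_of_lt hkm
      linarith
    have hc : ((m + 1 : ℕ) : ℚ) = (m : ℚ) + 1 := by push_cast; ring
    simp only [mul_inv_rev, inv_inv, hc]
    rw [← key]
    group)

lemma rho_y (i : ℕ) : rho (y i) = (permf i)⁻¹ := by
  simp [rho, y, PresentedGroup.toGroup.of]

lemma fix_zpow {α : Type*} (e : Equiv.Perm α) (x : α) (h : e x = x) (n : ℤ) : (e ^ n) x = x := by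
  have hp : ∀ (f : Equiv.Perm α), f x = x → ∀ m : ℕ, (f ^ m) x = x := by
    intro f hf m; induction m with
    | zero => rfl
    | succ m ih => rw [pow_succ, Equiv.Perm.mul_apply, hf, ih]
  obtain ⟨m, rfl | rfl⟩ := n.eq_nat_or_neg
  · rw [zpow_natCast]; exact hp e h m
  · rw [zpow_neg, zpow_natCast, ← inv_pow]
    refine hp e⁻¹ ?_ m
    conv_lhs => rw [← h]
    exact Equiv.symm_apply_apply _ x

lemma permf1_pow_ge (k : ℕ) : (2 : ℚ) ≤ ((permf 1) ^ (k + 1)) (3/2) := by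
  induction k with
  | zero =>
    show (2:ℚ) ≤ pf 1 (3/2)
    unfold pf; norm_num
  | succ k ih =>
    rw [pow_succ', Equiv.Perm.mul_apply]
    show (2:ℚ) ≤ pf 1 _
    unfold pf; split_ifs <;> linarith

lemma permf1_inv_pow_le (k : ℕ) : (((permf 1)⁻¹) ^ (k + 1)) (3/2 : ℚ) ≤ 5/4 := by
  have happ : ∀ u : ℚ, ((permf 1)⁻¹) u = pg 1 u := fun u => rfl
  have step : ∀ u : ℚ, u ≤ 5/4 → pg 1 u ≤ 5/4 := by
    intro u hu; unfold pg; split_ifs <;> linarith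
  induction k with
  | zero =>
    rw [pow_one, happ]
    unfold pg; norm_num
  | succ k ih =>
    rw [pow_succ', Equiv.Perm.mul_apply, happ]
    exact step _ ih

lemma sep_zpow {c : ℤ} (h : (rho (y 1)) ^ c = (rho (y 2)) ^ c) : c = 0 := by
  rw [rho_y, rho_y] at h
  norm_num at h
  have h2 : permf (1:ℚ) ^ c = permf (2:ℚ) ^ c := h
  have hfix2 : permf (2:ℚ) (3/2) = 3/2 := by
    show pf 2 (3/2) = 3/2
    unfold pf; norm_num
  have hv : ((permf (1:ℚ)) ^ c) (3/2) = 3/2 := by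
    rw [h2]; exact fix_zpow _ _ hfix2 _
  by_contra hc0
  obtain ⟨m, hm | hm⟩ := c.eq_nat_or_neg
  · have hm0 : m ≠ 0 := by omega
    obtain ⟨j, rfl⟩ := Nat.exists_eq_succ_of_ne_zero hm0
    rw [hm, zpow_natCast] at hv
    have := permf1_pow_ge j
    rw [hv] at this; norm_num at this
  · have hm0 : m ≠ 0 := by omega
    obtain ⟨j, rfl⟩ := Nat.exists_eq_succ_of_ne_zero hm0
    rw [hm, zpow_neg, zpow_natCast, ← inv_pow] at hv
    have := permf1_inv_pow_le j
    rw [hv] at this; norm_num at this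


/-! ### The normal form `y₀^a h y₀^{-b}` and injectivity of the shift -/

lemma y_pow_comm {i : ℕ} (hi : 1 ≤ i) (n : ℕ) : y i * (y 0) ^ n = (y 0) ^ n * y (i + n) := by
  induction n generalizing i with
  | zero => simp
  | succ n ih =>
    rw [pow_succ, show y i * ((y 0)^n * y 0) = (y i * (y 0)^n) * y 0 by group, ih hi,
      show (y 0)^n * y (i + n) * y 0 = (y 0)^n * (y (i+n) * y 0) by group,
      rel_y (show 0 < i + n by omega)]
    rw [show i + n + 1 = i + (n+1) by omega]
    group

lemma y_pow_comm_inv {i : ℕ} (hi : 1 ≤ i) (n : ℕ) :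
    (y i)⁻¹ * (y 0) ^ n = (y 0) ^ n * (y (i + n))⁻¹ := by
  have h := y_pow_comm hi n
  rw [show (y i)⁻¹ * (y 0)^n = (y i)⁻¹ * ((y 0)^n * y (i+n)) * (y (i+n))⁻¹ by group, ← h]
  group

section Phi2
variable {φ : FThompson →* FThompson} (hφ : ∀ i : ℕ, φ (y i) = y (i + 1))

def Tset (φ : FThompson →* FThompson) : Set FThompson :=
  {g | ∃ n m : ℕ, ∃ h ∈ Y 1, g = (y 0) ^ n * h * ((y 0) ^ m)⁻¹}

include hφ

lemma Tset_mul_gen {i : ℕ} {g : FThompson} (hg : g ∈ Tset φ) :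
    y i * g ∈ Tset φ ∧ (y i)⁻¹ * g ∈ Tset φ := by
  obtain ⟨n, m, h, hh, rfl⟩ := hg
  rcases Nat.eq_zero_or_pos i with rfl | hi
  · constructor
    · exact ⟨n + 1, m, h, hh, by rw [pow_succ']; group⟩
    · rcases Nat.eq_zero_or_pos n with rfl | hn
      · refine ⟨0, m + 1, φ h, Y_le (by omega) (phi_memY hφ hh), ?_⟩
        have hr3 : h * y 0 = y 0 * φ h := R3 hφ hh
        rw [show (y 0)⁻¹ * ((y 0)^0 * h * ((y 0)^m)⁻¹) =
          (y 0)⁻¹ * (h * y 0) * (y 0)⁻¹ * ((y 0)^m)⁻¹ by group, hr3, pow_succ]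
        group
      · obtain ⟨n', rfl⟩ := Nat.exists_eq_succ_of_ne_zero (Nat.pos_iff_ne_zero.mp hn)
        exact ⟨n', m, h, hh, by rw [pow_succ]; group⟩
  · constructor
    · refine ⟨n, m, y (i + n) * h, Subgroup.mul_mem _ (y_mem_Y (by omega)) hh, ?_⟩
      rw [show y i * ((y 0)^n * h * ((y 0)^m)⁻¹) = (y i * (y 0)^n) * h * ((y 0)^m)⁻¹ by group,
        y_pow_comm hi]
      group
    · refine ⟨n, m, (y (i + n))⁻¹ * h, Subgroup.mul_mem _ (Subgroup.inv_mem _ (y_mem_Y (by omega))) hh, ?_⟩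
      rw [show (y i)⁻¹ * ((y 0)^n * h * ((y 0)^m)⁻¹) = ((y i)⁻¹ * (y 0)^n) * h * ((y 0)^m)⁻¹ by group,
        y_pow_comm_inv hi]
      group

lemma mem_Tset (g : FThompson) : g ∈ Tset φ := by
  have key : ∀ z : FreeGroup ℕ, ∀ t ∈ Tset φ, PresentedGroup.mk thompsonRels z * t ∈ Tset φ := by
    intro z
    induction z using FreeGroup.induction_on with
    | C1 => intro t ht; rw [map_one, one_mul]; exact ht
    | of x => intro t ht; exact (Tset_mul_gen hφ ht).1
    | inv_of x _ => intro t ht; rw [map_inv]; exact (Tset_mul_gen hφ ht).2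
    | mul u v ihu ihv =>
      intro t ht
      rw [map_mul, mul_assoc]
      exact ihu _ (ihv _ ht)
  induction g using PresentedGroup.induction_on with
  | _ z =>
    have h1 : (1 : FThompson) ∈ Tset φ := ⟨0, 0, 1, Subgroup.one_mem _, by group⟩
    simpa using key z 1 h1


lemma phi_inj : Function.Injective φ := by
  rw [injective_iff_map_eq_one]
  intro g hg1
  obtain ⟨n, m, h, hh, rfl⟩ := mem_Tset hφ (φ := φ) g
  have hphig : (y 1) ^ n * φ h * ((y 1) ^ m)⁻¹ = 1 := by
    rw [← hφ 0, ← map_pow, ← map_pow, ← map_inv, ← map_mul, ← map_mul]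
    exact hg1
  set c : ℤ := (m : ℤ) - (n : ℤ) with hc
  have hphih : φ h = (y 1) ^ c := by
    have : φ h = ((y 1) ^ n)⁻¹ * (y 1) ^ m := by
      have h' : (y 1) ^ n * φ h = (y 1) ^ m := by
        have h2 := hphig; rwa [mul_inv_eq_one] at h2
      rw [← h']; group
    rw [this, hc, ← zpow_natCast (y 1) n, ← zpow_natCast (y 1) m, ← zpow_neg, ← zpow_add]
    congr 1; omega
  have hhval : h = y 0 * (y 1) ^ c * (y 0)⁻¹ := by
    have := R3 hφ hh
    rw [hphih] at this
    rw [← this]; group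
  have hg2 : (y 1) ^ n * (y 1 * (y 2) ^ c * (y 1)⁻¹) * ((y 1) ^ m)⁻¹ = 1 := by
    have : φ ((y 0) ^ n * (y 0 * (y 1) ^ c * (y 0)⁻¹) * ((y 0) ^ m)⁻¹) = 1 := by
      rw [← hhval]; exact hg1
    rw [map_mul, map_mul, map_inv, map_pow, map_pow, map_mul, map_mul, map_inv,
      map_zpow, hφ 0, hφ 1] at this
    exact this
  have hyc : (y 2) ^ c = (y 1) ^ c := by
    have h12 : y 1 * (y 2) ^ c * (y 1)⁻¹ = (y 1) ^ c := by
      have : y 1 * (y 2)^c * (y 1)⁻¹ = ((y 1)^n)⁻¹ * (y 1)^m := by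
        have h' : (y 1) ^ n * (y 1 * (y 2)^c * (y 1)⁻¹) = (y 1) ^ m := by
          have h2 := hg2; rwa [mul_inv_eq_one] at h2
        rw [← h']; group
      rw [this, hc, ← zpow_natCast (y 1) n, ← zpow_natCast (y 1) m, ← zpow_neg, ← zpow_add]
      congr 1; omega
    calc (y 2) ^ c = (y 1)⁻¹ * (y 1 * (y 2)^c * (y 1)⁻¹) * y 1 := by group
      _ = (y 1)⁻¹ * (y 1)^c * y 1 := by rw [h12]
      _ = (y 1) ^ c := by group
  have hc0 : c = 0 := by
    apply sep_zpow
    rw [← map_zpow, ← map_zpow, hyc]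
  have hnm : n = m := by omega
  rw [hhval, hc0, hnm]
  group

end Phi2

/-! ### Words in the generators `a i` -/

def L (p : ℕ × Bool) : FThompson := if p.2 then a p.1 else (a p.1)⁻¹

def Ew (l : List (ℕ × Bool)) : FThompson := (l.map L).prod

def Ge (k : ℕ) (l : List (ℕ × Bool)) : Prop := ∀ p ∈ l, k ≤ p.1

lemma Ew_nil : Ew [] = 1 := rfl

lemma Ew_cons (p : ℕ × Bool) (l : List (ℕ × Bool)) : Ew (p :: l) = L p * Ew l := by
  simp [Ew]

lemma Ew_append (l1 l2 : List (ℕ × Bool)) : Ew (l1 ++ l2) = Ew l1 * Ew l2 := by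
  simp [Ew]

lemma L_true (i : ℕ) : L (i, true) = a i := rfl

lemma L_false (i : ℕ) : L (i, false) = (a i)⁻¹ := rfl

lemma L_neg (p : ℕ × Bool) : L (p.1, !p.2) = (L p)⁻¹ := by
  rcases p with ⟨i, b⟩
  cases b <;> simp [L]

lemma Ew_single (q : ℕ × Bool) : Ew [q] = L q := by simp [Ew]

lemma Ew_revneg (l : List (ℕ × Bool)) :
    Ew (l.reverse.map fun p => (p.1, !p.2)) = (Ew l)⁻¹ := by
  induction l with
  | nil => simp [Ew]
  | cons p l ih =>
    rw [List.reverse_cons, List.map_append, Ew_append, ih]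
    simp only [List.map_cons, List.map_nil, Ew_single, L_neg, Ew_cons, Ew_nil, mul_one]
    group

lemma Ew_mem (l : List (ℕ × Bool)) : Ew l ∈ orientedF := by
  induction l with
  | nil => exact Subgroup.one_mem _
  | cons p l ih =>
    rw [Ew_cons]
    refine Subgroup.mul_mem _ ?_ ih
    rcases p with ⟨i, b⟩
    cases b
    · exact Subgroup.inv_mem _ (a_mem i)
    · exact a_mem i

lemma exists_word {g : FThompson} (hg : g ∈ orientedF) : ∃ l, Ew l = g := by
  induction hg using Subgroup.closure_induction with
  | mem x hx =>
    obtain ⟨i, rfl⟩ := hx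
    exact ⟨[(i, true)], by simp [Ew, L, a]⟩
  | one => exact ⟨[], rfl⟩
  | mul u v hu hv ihu ihv =>
    obtain ⟨l1, rfl⟩ := ihu
    obtain ⟨l2, rfl⟩ := ihv
    exact ⟨l1 ++ l2, Ew_append l1 l2⟩
  | inv u hu ihu =>
    obtain ⟨l, rfl⟩ := ihu
    exact ⟨l.reverse.map fun p => (p.1, !p.2), Ew_revneg l⟩

/-! ### Moving `a 0` around in words -/

lemma a0_L_comm {i : ℕ} (hi : 1 ≤ i) (b : Bool) :
    L (i, b) * a 0 = a 0 * L (i + 2, b) := by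
  have hc : a i * a 0 = a 0 * a (i + 2) := a_comm (show 0 < i by omega)
  cases b
  · rw [L_false, L_false, eq_comm, mul_inv_eq_iff_eq_mul, mul_assoc, ← hc]
    group
  · rw [L_true, L_true]; exact hc

lemma L_pow_comm {i : ℕ} (hi : 1 ≤ i) (b : Bool) (s : ℕ) :
    L (i, b) * (a 0) ^ s = (a 0) ^ s * L (i + 2 * s, b) := by
  induction s with
  | zero => simp
  | succ s ih =>
    rw [pow_succ, show L (i, b) * ((a 0)^s * a 0) = (L (i, b) * (a 0)^s) * a 0 by group, ih,
      show (a 0)^s * L (i + 2*s, b) * a 0 = (a 0)^s * (L (i + 2*s, b) * a 0) by group,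
      a0_L_comm (by omega) b, show i + 2*s + 2 = i + 2*(s+1) by omega]
    group

lemma a0_inv_L {i : ℕ} (hi : 1 ≤ i) (b : Bool) :
    (a 0)⁻¹ * L (i, b) = L (i + 2, b) * (a 0)⁻¹ := by
  have h := a0_L_comm hi b
  rw [show (a 0)⁻¹ * L (i, b) = (a 0)⁻¹ * (L (i, b) * a 0) * (a 0)⁻¹ by group, h]
  group

lemma a0_inv_Ew {l : List (ℕ × Bool)} (hl : Ge 1 l) :
    (a 0)⁻¹ * Ew l = Ew (l.map fun p => (p.1 + 2, p.2)) * (a 0)⁻¹ := by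
  induction l with
  | nil => simp [Ew]
  | cons p l ih =>
    rcases p with ⟨i, b⟩
    have hi : 1 ≤ i := hl (i, b) (by simp)
    have hl' : Ge 1 l := fun q hq => hl q (by simp [hq])
    rw [List.map_cons, Ew_cons, Ew_cons,
      show (a 0)⁻¹ * (L (i, b) * Ew l) = ((a 0)⁻¹ * L (i, b)) * Ew l by group,
      a0_inv_L hi b,
      show L (i + 2, b) * (a 0)⁻¹ * Ew l = L (i + 2, b) * ((a 0)⁻¹ * Ew l) by group,
      ih hl']
    group

lemma a0_L_down {i : ℕ} (hi : 3 ≤ i) (b : Bool) :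
    a 0 * L (i, b) * (a 0)⁻¹ = L (i - 2, b) := by
  have h := a0_L_comm (i := i - 2) (by omega) b
  rw [show i - 2 + 2 = i by omega] at h
  rw [mul_inv_eq_iff_eq_mul]
  exact h.symm

lemma a0_Ew_down {l : List (ℕ × Bool)} (hl : Ge 3 l) :
    a 0 * Ew l * (a 0)⁻¹ = Ew (l.map fun p => (p.1 - 2, p.2)) := by
  induction l with
  | nil => simp [Ew]
  | cons p l ih =>
    rcases p with ⟨i, b⟩
    have hi : 3 ≤ i := hl (i, b) (by simp)
    have hl' : Ge 3 l := fun q hq => hl q (by simp [hq])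
    rw [List.map_cons, Ew_cons, Ew_cons, ← a0_L_down hi b, ← ih hl']
    group

lemma conj_pow_down {s : ℕ} {l : List (ℕ × Bool)} (hl : Ge (2 * s + 1) l) :
    (a 0) ^ s * Ew l * ((a 0) ^ s)⁻¹ = Ew (l.map fun p => (p.1 - 2 * s, p.2)) := by
  induction s generalizing l with
  | zero =>
    simp only [pow_zero, one_mul, inv_one, mul_one]
    congr 1
    conv_lhs => rw [show l = l.map id from (List.map_id l).symm]
    apply List.map_congr_left
    intro p hp
    simp
  | succ s ih =>
    have hl3 : Ge 3 l := fun q hq => by have := hl q hq; omega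
    have hstep : a 0 * Ew l * (a 0)⁻¹ = Ew (l.map fun p => (p.1 - 2, p.2)) := a0_Ew_down hl3
    have hl' : Ge (2 * s + 1) (l.map fun p => (p.1 - 2, p.2)) := by
      intro q hq
      simp only [List.mem_map] at hq
      obtain ⟨r, hr, rfl⟩ := hq
      have := hl r hr
      simp; omega
    calc (a 0)^(s+1) * Ew l * ((a 0)^(s+1))⁻¹
        = (a 0)^s * (a 0 * Ew l * (a 0)⁻¹) * ((a 0)^s)⁻¹ := by rw [pow_succ]; group
      _ = (a 0)^s * Ew (l.map fun p => (p.1 - 2, p.2)) * ((a 0)^s)⁻¹ := by rw [hstep]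
      _ = Ew ((l.map fun p => (p.1 - 2, p.2)).map fun p => (p.1 - 2 * s, p.2)) := ih hl'
      _ = Ew (l.map fun p => (p.1 - 2 * (s+1), p.2)) := by
            rw [List.map_map]
            congr 1
            apply List.map_congr_left
            intro p hp
            simp [Function.comp]
            omega

/-! ### The `pq⁻¹`-style decomposition of an `a`-word -/

lemma lemR (l : List (ℕ × Bool)) :
    ∃ s t : ℕ, ∃ v : List (ℕ × Bool), Ge 1 v ∧ s + t + v.length ≤ l.length ∧
      Ew l = (a 0) ^ s * Ew v * ((a 0) ^ t)⁻¹ := by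
  induction l with
  | nil => exact ⟨0, 0, [], fun p hp => by simp at hp, by simp, by simp [Ew]⟩
  | cons p l ih =>
    obtain ⟨s, t, v, hv, hlen, heq⟩ := ih
    rcases p with ⟨i, b⟩
    rcases Nat.eq_zero_or_pos i with rfl | hi
    · cases b
      · -- letter (a 0)⁻¹
        rcases Nat.eq_zero_or_pos s with rfl | hs
        · refine ⟨0, t + 1, v.map fun p => (p.1 + 2, p.2), ?_, ?_, ?_⟩
          · intro q hq
            simp only [List.mem_map] at hq
            obtain ⟨r, hr, rfl⟩ := hq
            simp
          · simp at hlen ⊢; omega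
          · rw [Ew_cons, heq, L_false, pow_zero, one_mul, ← mul_assoc, a0_inv_Ew hv,
              pow_succ, mul_inv_rev]
            group
        · obtain ⟨s', rfl⟩ := Nat.exists_eq_succ_of_ne_zero (Nat.pos_iff_ne_zero.mp hs)
          refine ⟨s', t, v, hv, by simp at hlen ⊢; omega, ?_⟩
          rw [Ew_cons, heq, L_false, pow_succ']
          group
      · -- letter (a 0)
        refine ⟨s + 1, t, v, hv, by simp at hlen ⊢; omega, ?_⟩
        rw [Ew_cons, heq, L_true, pow_succ']
        group
    · -- letter with index ≥ 1
      refine ⟨s, t, (i + 2 * s, b) :: v, ?_, by simp at hlen ⊢; omega, ?_⟩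
      · intro q hq
        rcases List.mem_cons.mp hq with rfl | hq2
        · simp; omega
        · exact hv q hq2
      · rw [Ew_cons, heq, Ew_cons,
          show L (i, b) * ((a 0)^s * Ew v * ((a 0)^t)⁻¹) =
            (L (i, b) * (a 0)^s) * (Ew v * ((a 0)^t)⁻¹) by group,
          L_pow_comm hi b s]
        group

/-! ### `pz` values on words -/

lemma pz_a (i : ℕ) : pz (a i) = Multiplicative.ofAdd (if i = 0 then (1:ℤ) else 0) := by
  unfold a
  rw [map_mul, pz_y, pz_y]
  rcases Nat.eq_zero_or_pos i with rfl | hi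
  · simp
  · have : i ≠ 0 := by omega
    have h2 : i + 1 ≠ 0 := by omega
    simp [this, h2]

lemma pz_Ew_ge1 {l : List (ℕ × Bool)} (hl : Ge 1 l) : pz (Ew l) = 1 := by
  induction l with
  | nil => simp [Ew]
  | cons p l ih =>
    have hp : 1 ≤ p.1 := hl p (by simp)
    have hl' : Ge 1 l := fun q hq => hl q (by simp [hq])
    rw [Ew_cons, map_mul, ih hl']
    rcases p with ⟨i, b⟩
    have hi : i ≠ 0 := by simp at hp; omega
    cases b <;> simp [L, pz_a, hi]

/-! ### Words and the shift -/

section Phi3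
variable {φ : FThompson →* FThompson} (hφ : ∀ i : ℕ, φ (y i) = y (i + 1))
include hφ

lemma phi_L (p : ℕ × Bool) : φ (L p) = L (p.1 + 1, p.2) := by
  rcases p with ⟨i, b⟩
  cases b
  · rw [L_false, L_false, map_inv, phi_a hφ]
  · rw [L_true, L_true, phi_a hφ]

lemma Ew_up (l : List (ℕ × Bool)) : φ (Ew l) = Ew (l.map fun p => (p.1 + 1, p.2)) := by
  induction l with
  | nil => simp [Ew]
  | cons p l ih =>
    rw [Ew_cons, map_mul, ih, List.map_cons, Ew_cons, phi_L hφ]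

/-- conjugating a deep element of `Y 1` by a power of `a 0` -/
lemma conj_mem_Y (s : ℕ) {j : ℕ} {h : FThompson} (h1 : h ∈ Y 1) (hj : h ∈ Y j) :
    ((a 0) ^ s)⁻¹ * h * (a 0) ^ s ∈ Y (j + 2 * s) := by
  induction s generalizing h j with
  | zero => simpa using hj
  | succ s ih =>
    have hstep : (a 0)⁻¹ * h * a 0 = φ (φ h) := by
      have := R2 hφ h1
      rw [show (a 0)⁻¹ * h * a 0 = (a 0)⁻¹ * (h * a 0) by group, this]
      group
    have h1' : φ (φ h) ∈ Y 1 := Y_le (by omega) (phi_memY hφ (phi_memY hφ h1))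
    have hj' : φ (φ h) ∈ Y (j + 2) := phi_memY hφ (phi_memY hφ hj)
    have := ih h1' hj'
    rw [show j + 2 + 2 * s = j + 2 * (s + 1) by omega] at this
    have heq2 : ((a 0)^(s+1))⁻¹ * h * (a 0)^(s+1) = ((a 0)^s)⁻¹ * φ (φ h) * (a 0)^s := by
      rw [← hstep, pow_succ]; group
    rw [heq2]; exact this

lemma pull_down {x : FThompson} {k : ℕ} (hx : φ x ∈ Y (k + 1)) : x ∈ Y k := by
  rw [← mapY hφ k] at hx
  obtain ⟨z, hz, hzx⟩ := hx
  rwa [← phi_inj hφ hzx]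

/-- The key combinatorial lemma. -/
lemma main_word : ∀ n : ℕ, ∀ l : List (ℕ × Bool), l.length ≤ n → ∀ k, Ew l ∈ Y k →
    ∃ v : List (ℕ × Bool), Ge k v ∧ v.length ≤ l.length ∧ Ew v = Ew l := by
  intro n
  induction n using Nat.strong_induction_on with
  | _ n ihn =>
    -- the core step: removing all occurrences of `a 0`
    have core : ∀ l : List (ℕ × Bool), l.length ≤ n → Ew l ∈ Y 1 →
        ∃ v, Ge 1 v ∧ v.length ≤ l.length ∧ Ew v = Ew l := by
      intro l hlen hmem
      obtain ⟨s, t, v, hv, hlen2, heq⟩ := lemR l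
      have hst : s = t := by
        have h1 : pz (Ew l) = 1 := pz_Y1 hmem
        have h2 : pz (Ew l) = (Multiplicative.ofAdd (1:ℤ)) ^ s *
            ((Multiplicative.ofAdd (1:ℤ)) ^ t)⁻¹ := by
          rw [heq, map_mul, map_mul, map_inv, map_pow, map_pow, pz_a, pz_Ew_ge1 hv]
          simp
        rw [h1] at h2
        have h3 : Multiplicative.ofAdd ((s:ℤ)) = Multiplicative.ofAdd ((t:ℤ)) := by
          have h4 := h2.symm
          rw [mul_inv_eq_one] at h4
          rw [← ofAdd_nsmul, ← ofAdd_nsmul] at h4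
          simpa using h4
        have := Multiplicative.ofAdd.injective h3
        omega
      subst hst
      rcases Nat.eq_zero_or_pos s with rfl | hs
      · refine ⟨v, hv, by omega, ?_⟩
        rw [heq]; simp
      · -- s ≥ 1 : the conjugated word is deep, apply the strong induction hypothesis
        have hEv : Ew v = ((a 0)^s)⁻¹ * Ew l * (a 0)^s := by
          rw [heq]; group
        have hdeep : Ew v ∈ Y (1 + 2 * s) := by
          rw [hEv]; exact conj_mem_Y hφ s hmem hmem
        have hlt : v.length < n := by omega
        obtain ⟨w, hw, hwlen, hweq⟩ := ihn v.length hlt v le_rfl (1 + 2 * s) hdeep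
        have hw' : Ge (2 * s + 1) w := by
          intro q hq; have := hw q hq; omega
        refine ⟨w.map fun p => (p.1 - 2 * s, p.2), ?_, ?_, ?_⟩
        · intro q hq
          simp only [List.mem_map] at hq
          obtain ⟨r, hr, rfl⟩ := hq
          have := hw' r hr
          simp; omega
        · rw [List.length_map]; omega
        · rw [← conj_pow_down hw', hweq, hEv, heq]
          group
    -- now the general statement, by induction on `k`
    intro l hlen k
    induction k generalizing l with
    | zero => exact fun _ => ⟨l, fun p _ => Nat.zero_le _, le_rfl, rfl⟩
    | succ k ihk =>
      intro hmem
      obtain ⟨v, hv1, hvlen, hveq⟩ := core l hlen (Y_le (by omega) hmem)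
      set vd := v.map (fun p => (p.1 - 1, p.2)) with hvd
      have hvmap : vd.map (fun p => (p.1 + 1, p.2)) = v := by
        rw [hvd, List.map_map]
        conv_rhs => rw [show v = v.map id from (List.map_id v).symm]
        apply List.map_congr_left
        intro p hp
        have h1 := hv1 p hp
        have h2 : p.1 - 1 + 1 = p.1 := by omega
        simp [Function.comp, h2]
      have hup : φ (Ew vd) = Ew v := by rw [Ew_up hφ, hvmap]
      have hvdmem : Ew vd ∈ Y k := by
        apply pull_down hφ
        rw [hup, hveq]
        exact hmem
      have hvdlen : vd.length ≤ n := by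
        rw [hvd, List.length_map]; omega
      obtain ⟨w, hw1, hwlen, hweq⟩ := ihk vd hvdlen hvdmem
      refine ⟨w.map fun p => (p.1 + 1, p.2), ?_, ?_, ?_⟩
      · intro q hq
        simp only [List.mem_map] at hq
        obtain ⟨r, hr, rfl⟩ := hq
        have := hw1 r hr
        simp; omega
      · rw [List.length_map]
        have : vd.length = v.length := by rw [hvd, List.length_map]
        omega
      · rw [← Ew_up hφ, hweq, hup, hveq]

/-- backward direction -/
lemma backward {g : FThompson} (hg : φ g ∈ orientedF) : g ∈ orientedF := by
  obtain ⟨l, hl⟩ := exists_word hg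
  have hmem : Ew l ∈ Y 1 := by rw [hl]; exact phi_mem_Y1 hφ g
  obtain ⟨v, hv, _, hveq⟩ := main_word hφ l.length l le_rfl 1 hmem
  set vd := v.map (fun p => (p.1 - 1, p.2)) with hvd
  have hvmap : vd.map (fun p => (p.1 + 1, p.2)) = v := by
    rw [hvd, List.map_map]
    conv_rhs => rw [show v = v.map id from (List.map_id v).symm]
    apply List.map_congr_left
    intro p hp
    have h1 := hv p hp
    have h2 : p.1 - 1 + 1 = p.1 := by omega
    simp [Function.comp, h2]
  have hup : φ (Ew vd) = Ew v := by rw [Ew_up hφ, hvmap]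
  have : φ (Ew vd) = φ g := by rw [hup, hveq, hl]
  have hgeq : Ew vd = g := phi_inj hφ this
  rw [← hgeq]
  exact Ew_mem vd

/-- forward direction -/
lemma forward {g : FThompson} (hg : g ∈ orientedF) : φ g ∈ orientedF := by
  induction hg using Subgroup.closure_induction with
  | mem x hx =>
    obtain ⟨i, rfl⟩ := hx
    rw [show (y i * y (i+1)) = a i from rfl, phi_a hφ]
    exact a_mem (i + 1)
  | one => rw [map_one]; exact Subgroup.one_mem _
  | mul u v hu hv ihu ihv => rw [map_mul]; exact Subgroup.mul_mem _ ihu ihv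
  | inv u hu ihu => rw [map_inv]; exact Subgroup.inv_mem _ ihu

end Phi3

end TAux

/-- The assignment `yᵢ ↦ y_{i+1}` extends to an endomorphism `φ` of `F`
(the shift), and for every such `φ` and every `g ∈ F`, `g ∈ F⃗ ↔ φ g ∈ F⃗`. -/
theorem shift_preserves_orientedF :
    (∃ φ : FThompson →* FThompson, ∀ i : ℕ, φ (y i) = y (i + 1)) ∧
    ∀ φ : FThompson →* FThompson, (∀ i : ℕ, φ (y i) = y (i + 1)) →
      ∀ g : FThompson, g ∈ orientedF ↔ φ g ∈ orientedF := by
  constructor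
  · exact ⟨TAux.phi0, TAux.phi0_y⟩
  · intro φ hφ g
    exact ⟨fun h => TAux.forward hφ h, fun h => TAux.backward hφ h⟩
end

section
/- Let d be an odd positive integer. Then for every choice of indices i : Fin d → ℕ and signs ε : Fin d → {1, −1}, the product y_{i(1)}^{ε(1)} ⋯ y_{i(d)}^{ε(d)} does not belong to the oriented subgroup F⃗. Consequently, all odd moments of s_n with respect to the functional θ(g) = 1_{g ∈ F⃗} vanish. -/
open Classical in
/-- The state `θ` on `ℂ[F]` given by the linear extension of the indicator
function of the oriented subgroup `F⃗` (i.e. of `Chr_{Γ(g)}(2)/2`). -/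
noncomputable def theta (v : MonoidAlgebra ℂ FThompson) : ℂ :=
  v.coeff.sum fun g c => if g ∈ orientedF then c else 0

/-- `aₖ = (yₖ + yₖ⁻¹)/√2` in `ℂ[F]`. -/
noncomputable def aY (k : ℕ) : MonoidAlgebra ℂ FThompson :=
  ((Real.sqrt 2 : ℂ))⁻¹ •
    (MonoidAlgebra.of ℂ FThompson (y k) + MonoidAlgebra.of ℂ FThompson ((y k)⁻¹))

/-- `sₙ = (a₀ + ⋯ + a_{n-1})/√n` in `ℂ[F]`. -/
noncomputable def sY (n : ℕ) : MonoidAlgebra ℂ FThompson :=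
  ((Real.sqrt n : ℂ))⁻¹ • ∑ k ∈ Finset.range n, aY k

/-- The parity homomorphism on `F`, sending every generator to `1 ∈ ℤ/2`. -/
noncomputable def phiPar : FThompson →* Multiplicative (ZMod 2) :=
  PresentedGroup.toGroup (f := fun _ => Multiplicative.ofAdd (1 : ZMod 2)) (by
    rintro r ⟨m, k, hk, rfl⟩
    simp [mul_inv_rev, mul_assoc])

lemma phiPar_y (n : ℕ) : phiPar (y n) = Multiplicative.ofAdd 1 :=
  PresentedGroup.toGroup.of _

lemma phiPar_y_inv (n : ℕ) : phiPar (y n)⁻¹ = Multiplicative.ofAdd 1 := by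
  rw [map_inv, phiPar_y]; decide

lemma phiPar_oriented {g : FThompson} (hg : g ∈ orientedF) : phiPar g = 1 := by
  induction hg using Subgroup.closure_induction with
  | mem g hg =>
      obtain ⟨i, rfl⟩ := hg
      rw [map_mul, phiPar_y, phiPar_y]; decide
  | one => exact map_one _
  | mul a b _ _ ha hb => rw [map_mul, ha, hb, mul_one]
  | inv a _ ha => rw [map_inv, ha, inv_one]

lemma support_pow {v : MonoidAlgebra ℂ FThompson}
    (hv : ∀ g ∈ v.coeff.support, phiPar g = Multiplicative.ofAdd 1) (m : ℕ) :
    ∀ g ∈ (v ^ m).coeff.support, phiPar g = Multiplicative.ofAdd (m : ZMod 2) := by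
  classical
  induction m with
  | zero =>
      intro g hg
      rw [pow_zero] at hg
      have : g = 1 := by
        have := Finsupp.support_single_subset hg
        simpa using this
      subst this
      simp [map_one]
  | succ m ih =>
      intro g hg
      rw [pow_succ] at hg
      obtain ⟨a, ha, b, hb, rfl⟩ := Finset.mem_mul.mp (MonoidAlgebra.support_coeff_mul_subset _ _ hg)
      rw [map_mul, ih a ha, hv b hb]
      push_cast
      rfl

lemma support_aY (k : ℕ) :
    ∀ g ∈ (aY k).coeff.support, phiPar g = Multiplicative.ofAdd 1 := by
  classical
  intro g hg
  have h1 := Finsupp.support_smul hg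
  have h2 := Finsupp.support_add h1
  rw [Finset.mem_union] at h2
  rcases h2 with h | h
  · have := Finsupp.support_single_subset h
    rw [Finset.mem_singleton] at this
    subst this; exact phiPar_y k
  · have := Finsupp.support_single_subset h
    rw [Finset.mem_singleton] at this
    subst this; exact phiPar_y_inv k

lemma support_sY (n : ℕ) :
    ∀ g ∈ (sY n).coeff.support, phiPar g = Multiplicative.ofAdd 1 := by
  classical
  intro g hg
  have h1 := Finsupp.support_smul hg
  obtain ⟨k, -, hk⟩ := Finset.mem_biUnion.mp (Finsupp.support_finset_sum (s := Finset.range n) (f := fun k => (aY k).coeff) (by rw [← MonoidAlgebra.coeff_sum]; exact h1))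
  exact support_aY k g hk

/-- For odd `d`, no product of `d` generators of `F` and their inverses lies in
the oriented subgroup `F⃗`; consequently all odd moments of `sₙ` with respect
to `θ` vanish. -/
theorem odd_words_not_in_orientedF (d : ℕ) (hd : Odd d) :
    (∀ (i : Fin d → ℕ) (ε : Fin d → ℤ), (∀ l, ε l = 1 ∨ ε l = -1) →
      ((List.finRange d).map (fun l => y (i l) ^ ε l)).prod ∉ orientedF) ∧
    (∀ n : ℕ, theta (sY n ^ d) = 0) := by
  classical
  have hd2 : (d : ZMod 2) = 1 := by
    have h := Nat.odd_iff.mp hd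
    rw [← ZMod.natCast_mod, h, Nat.cast_one]
  have hne : Multiplicative.ofAdd (1 : ZMod 2) ≠ 1 := by decide
  constructor
  · intro i ε hε hmem
    have h1 : phiPar (((List.finRange d).map (fun l => y (i l) ^ ε l)).prod)
        = Multiplicative.ofAdd 1 := by
      rw [map_list_prod, List.map_map]
      have : (phiPar ∘ fun l => y (i l) ^ ε l)
          = Function.const (Fin d) (Multiplicative.ofAdd (1 : ZMod 2)) := by
        funext l
        simp only [Function.comp_apply, Function.const_apply, map_zpow, phiPar_y]
        rcases hε l with h | h <;> rw [h] <;> decide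
      rw [this, List.map_const, List.prod_replicate, List.length_finRange]
      rw [← ofAdd_nsmul]
      simp [nsmul_eq_mul, hd2]
    rw [phiPar_oriented hmem] at h1
    exact hne h1.symm
  · intro n
    have hsupp := support_pow (support_sY n) d
    rw [theta, Finsupp.sum]
    apply Finset.sum_eq_zero
    intro g hg
    have : g ∉ orientedF := by
      intro hmem
      have := hsupp g hg
      rw [phiPar_oriented hmem, hd2] at this
      exact hne this.symm
    simp [this]
end

section
/- Let i, j ∈ ℕ and m, k ∈ {1, −1}. Then y_i^m y_j^k belongs to the oriented subgroup F⃗ if and only if (j = i + 1 and m = k = 1), or (i = j + 1 and m = k = −1), or (i = j and m = −k, in which case the product is the identity). -/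
namespace OrientedAux

/-- The space: Cantor set × parity marker. -/
abbrev X := (ℕ → Bool) × ZMod 2

def cons (b : Bool) (s : ℕ → Bool) : ℕ → Bool :=
  fun n => match n with
  | 0 => b
  | Nat.succ m => s m

def tl (s : ℕ → Bool) : ℕ → Bool := fun n => s (n + 1)

@[simp] lemma cons_zero (b s) : cons b s 0 = b := rfl
@[simp] lemma cons_succ (b s n) : cons b s (n + 1) = s n := rfl
@[simp] lemma tl_cons (b s) : tl (cons b s) = s := rfl
@[simp] lemma tl_apply (s n) : tl s n = s (n+1) := rfl

lemma cons_self (s : ℕ → Bool) (b : Bool) (h : s 0 = b) : cons b (tl s) = s := by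
  funext n; cases n with
  | zero => simp [h]
  | succ n => rfl

/-- `x₀⁻¹` direction: `0v ↦ 00v`, `10v ↦ 01v`, `11v ↦ 1v`. -/
def Bf (s : ℕ → Bool) : ℕ → Bool :=
  if s 0 then (if s 1 then tl s else cons false (cons true (tl (tl s)))) else cons false s

def dB (s : ℕ → Bool) : ZMod 2 := if s 0 && s 1 then 1 else 0

def Bh (x : X) : X := (Bf x.1, x.2 + dB x.1)

/-- inverse direction: `00u ↦ 0u`, `01u ↦ 10u`, `1u ↦ 11u`. -/
def Af (s : ℕ → Bool) : ℕ → Bool :=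
  if s 0 then cons true s else (if s 1 then cons true (cons false (tl (tl s))) else tl s)

def dA (s : ℕ → Bool) : ZMod 2 := if s 0 then 1 else 0

def Ah (x : X) : X := (Af x.1, x.2 + dA x.1)

lemma two_eq_zero : (1 : ZMod 2) + 1 = 0 := rfl

lemma Ah_Bh (x : X) : Ah (Bh x) = x := by
  obtain ⟨s, e⟩ := x
  rcases h0 : s 0 <;> rcases h1 : s 1
  · have hB : Bf s = cons false s := by simp [Bf, h0]
    have : Ah (Bh (s, e)) = (tl (cons false s), e) := by
      simp [Ah, Bh, Af, dA, dB, hB, h0, h1]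
    rw [this]; simp
  · have hB : Bf s = cons false s := by simp [Bf, h0]
    have : Ah (Bh (s, e)) = (tl (cons false s), e) := by
      simp [Ah, Bh, Af, dA, dB, hB, h0, h1]
    rw [this]; simp
  · have hB : Bf s = cons false (cons true (tl (tl s))) := by simp [Bf, h0, h1]
    have : Ah (Bh (s, e)) = (cons true (cons false (tl (tl s))), e) := by
      simp [Ah, Bh, Af, dA, dB, hB, h0, h1]
    rw [this]
    have hs : cons true (cons false (tl (tl s))) = s := by
      funext n
      match n with
      | 0 => simp [h0]
      | 1 => simp [h1]
      | (n+2) => rfl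
    rw [hs]
  · have hB : Bf s = tl s := by simp [Bf, h0, h1]
    have ht : tl s 0 = true := h1
    have : Ah (Bh (s, e)) = (cons true (tl s), e + 1 + 1) := by
      simp [Ah, Bh, Af, dA, dB, hB, h0, h1, ht]
    rw [this, cons_self s true h0, add_assoc, two_eq_zero, add_zero]

lemma Bh_Ah (x : X) : Bh (Ah x) = x := by
  obtain ⟨s, e⟩ := x
  rcases h0 : s 0 <;> rcases h1 : s 1
  · have hA : Af s = tl s := by simp [Af, h0, h1]
    have ht : tl s 0 = false := h1
    have : Bh (Ah (s, e)) = (cons false (tl s), e) := by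
      simp [Bh, Ah, Bf, dA, dB, hA, h0, h1, ht]
    rw [this, cons_self s false h0]
  · have hA : Af s = cons true (cons false (tl (tl s))) := by simp [Af, h0, h1]
    have : Bh (Ah (s, e)) = (cons false (cons true (tl (tl s))), e) := by
      simp [Bh, Ah, Bf, dA, dB, hA, h0, h1]
    rw [this]
    have hs : cons false (cons true (tl (tl s))) = s := by
      funext n
      match n with
      | 0 => simp [h0]
      | 1 => simp [h1]
      | (n+2) => rfl
    rw [hs]
  · have hA : Af s = cons true s := by simp [Af, h0]
    have : Bh (Ah (s, e)) = (tl (cons true s), e + 1 + 1) := by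
      simp [Bh, Ah, Bf, dA, dB, hA, h0, h1]
    rw [this, tl_cons, add_assoc, two_eq_zero, add_zero]
  · have hA : Af s = cons true s := by simp [Af, h0]
    have : Bh (Ah (s, e)) = (tl (cons true s), e + 1 + 1) := by
      simp [Bh, Ah, Bf, dA, dB, hA, h0, h1]
    rw [this, tl_cons, add_assoc, two_eq_zero, add_zero]

/-- "Apply `f` underneath a leading `1`" combinator. -/
def uh (f : X → X) (x : X) : X :=
  if x.1 0 then (cons true (f (tl x.1, x.2)).1, (f (tl x.1, x.2)).2) else x

lemma uh_comp (f g : X → X) : uh (f ∘ g) = uh f ∘ uh g := by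
  funext x
  obtain ⟨s, e⟩ := x
  rcases h0 : s 0
  · simp [uh, h0]
  · simp only [Function.comp_apply, uh, h0, if_true, cons_zero, tl_cons]

lemma uh_id : uh id = id := by
  funext x
  obtain ⟨s, e⟩ := x
  rcases h0 : s 0
  · simp [uh, h0]
  · simp only [uh, h0, if_true, id_eq]
    exact Prod.ext (cons_self s true h0) rfl

lemma iter_uh_comp (n : ℕ) (f g : X → X) : uh^[n] (f ∘ g) = uh^[n] f ∘ uh^[n] g := by
  induction n with
  | zero => rfl
  | succ n ih =>
      rw [Function.iterate_succ_apply', Function.iterate_succ_apply',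
        Function.iterate_succ_apply', ih, uh_comp]

lemma iter_uh_id (n : ℕ) : uh^[n] id = id := by
  induction n with
  | zero => rfl
  | succ n ih => rw [Function.iterate_succ_apply', ih, uh_id]

/-- Equivariance in the parity coordinate. -/
def Equi (f : X → X) : Prop := ∀ s ε, f (s, ε) = ((f (s, 0)).1, ε + (f (s, 0)).2)

lemma equi_Bh : Equi Bh := by intro s ε; simp [Bh, add_assoc]

lemma equi_Ah : Equi Ah := by intro s ε; simp [Ah, add_assoc]

lemma equi_uh {f : X → X} (hf : Equi f) : Equi (uh f) := by
  intro s ε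
  rcases h0 : s 0
  · simp [uh, h0]
  · simp only [uh, h0, if_true]
    rw [hf (tl s) ε]

lemma equi_iter_uh {f : X → X} (hf : Equi f) (n : ℕ) : Equi (uh^[n] f) := by
  induction n with
  | zero => exact hf
  | succ n ih => rw [Function.iterate_succ_apply']; exact equi_uh ih

/-- The key braid-type relation at level 0. -/
lemma base_rel (H : X → X) (hH : Equi H) : uh H ∘ Bh = Bh ∘ uh (uh H) := by
  funext x
  obtain ⟨s, e⟩ := x
  rcases h0 : s 0 <;> rcases h1 : s 1
  · -- s = 00v : both sides fix modulo Bh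
    have hB : Bf s = cons false s := by simp [Bf, h0]
    simp [uh, Bh, dB, hB, h0, h1]
  · -- s = 01v
    have hB : Bf s = cons false s := by simp [Bf, h0]
    simp [uh, Bh, dB, hB, h0, h1]
  · -- s = 10v
    have hB : Bf s = cons false (cons true (tl (tl s))) := by simp [Bf, h0, h1]
    have ht : tl s 0 = false := h1
    simp only [Function.comp_apply, uh, Bh, dB, hB, h0, h1, ht, if_true, if_false,
      cons_zero, tl_cons, Bool.and_false, Bool.true_and, add_zero, Bool.false_eq_true,
      cons_succ]
    simp [cons_self (tl s) false ht, cons_self s true h0]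
    rw [hB]
  · -- s = 11v
    have hB : Bf s = tl s := by simp [Bf, h0, h1]
    have ht : tl s 0 = true := h1
    simp only [Function.comp_apply, uh, Bh, dB, hB, h0, h1, ht, if_true,
      cons_zero, tl_cons, Bool.and_self, Bool.true_and]
    rw [hH (tl (tl s)) (e + 1)]
    rw [hH (tl (tl s)) e]
    simp only [Prod.mk.injEq]
    constructor
    · have : Bf (cons true (cons true (H (tl (tl s), 0)).1)) =
          tl (cons true (cons true (H (tl (tl s), 0)).1)) := by
        simp [Bf]
      rw [this, tl_cons]
    · simp only [cons_succ, cons_zero, if_true]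
      ring

/-- The sequence of permote maps: `bb n` represents `y n`. -/
def bbF (n : ℕ) : X → X := uh^[n] Bh
def aaF (n : ℕ) : X → X := uh^[n] Ah

lemma equi_bbF (n : ℕ) : Equi (bbF n) := equi_iter_uh equi_Bh n

lemma bbF_succ (n : ℕ) : bbF (n+1) = uh (bbF n) := Function.iterate_succ_apply' uh n Bh
lemma aaF_succ (n : ℕ) : aaF (n+1) = uh (aaF n) := Function.iterate_succ_apply' uh n Ah

lemma main_rel {k m : ℕ} (h : k < m) : bbF m ∘ bbF k = bbF k ∘ bbF (m+1) := by
  obtain ⟨d, rfl⟩ : ∃ d, m = k + (d + 1) := ⟨m - k - 1, by omega⟩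
  have hb : ∀ t, bbF (k + t) = uh^[k] (bbF t) := by
    intro t
    exact Function.iterate_add_apply uh k t Bh
  have hbase : bbF (d+1) ∘ Bh = Bh ∘ bbF (d+2) := by
    rw [bbF_succ, show bbF (d+2) = uh (uh (bbF d)) by rw [bbF_succ, bbF_succ]]
    exact base_rel (bbF d) (equi_bbF d)
  calc bbF (k + (d+1)) ∘ bbF k = uh^[k] (bbF (d+1)) ∘ uh^[k] Bh := by rw [hb]; rfl
    _ = uh^[k] (bbF (d+1) ∘ Bh) := (iter_uh_comp k _ _).symm
    _ = uh^[k] (Bh ∘ bbF (d+2)) := by rw [hbase]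
    _ = uh^[k] Bh ∘ uh^[k] (bbF (d+2)) := iter_uh_comp k _ _
    _ = bbF k ∘ bbF (k + (d+1) + 1) := by rw [← hb]; rfl

/-- The permutation representing `y n`. -/
def e (n : ℕ) : Equiv.Perm X where
  toFun := bbF n
  invFun := aaF n
  left_inv := by
    intro x
    have : aaF n ∘ bbF n = id := by
      show uh^[n] Ah ∘ uh^[n] Bh = id
      rw [← iter_uh_comp, show Ah ∘ Bh = id from funext Ah_Bh, iter_uh_id]
    exact congrFun this x
  right_inv := by
    intro x
    have : bbF n ∘ aaF n = id := by
      show uh^[n] Bh ∘ uh^[n] Ah = id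
      rw [← iter_uh_comp, show Bh ∘ Ah = id from funext Bh_Ah, iter_uh_id]
    exact congrFun this x

@[simp] lemma e_apply (n : ℕ) (x : X) : e n x = bbF n x := rfl
@[simp] lemma e_inv_apply (n : ℕ) (x : X) : (e n)⁻¹ x = aaF n x := rfl

lemma rels_hold : ∀ r ∈ thompsonRels, FreeGroup.lift e r = 1 := by
  rintro r ⟨m, k, hkm, rfl⟩
  simp only [map_mul, map_inv, FreeGroup.lift_apply_of, mul_inv_eq_one]
  apply Equiv.ext
  intro x
  simp only [Equiv.Perm.mul_apply, e_apply]
  simpa using congrFun (main_rel hkm) x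

/-- The representation of Thompson's group on `X`. -/
def phi : FThompson →* Equiv.Perm X := PresentedGroup.toGroup rels_hold

@[simp] lemma phi_y (n : ℕ) : phi (y n) = e n := PresentedGroup.toGroup.of rels_hold

/-- The subgroup of parity-preserving permutations. -/
def K : Subgroup (Equiv.Perm X) where
  carrier := {p | ∀ x : X, x.2 = 0 ↔ (p x).2 = 0}
  one_mem' := fun _ => Iff.rfl
  mul_mem' := by
    intro p q hp hq x
    exact (hq x).trans (hp (q x))
  inv_mem' := by
    intro p hp x
    have := hp (p⁻¹ x)
    rw [show p (p⁻¹ x) = x from p.apply_symm_apply x] at this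
    exact this.symm

lemma mem_K_iff {p : Equiv.Perm X} : p ∈ K ↔ ∀ x : X, x.2 = 0 ↔ (p x).2 = 0 := Iff.rfl

/-- The generators of the oriented subgroup preserve parity. -/
lemma gen_parity (i : ℕ) (x : X) : (bbF i (bbF (i+1) x)).2 = x.2 := by
  induction i generalizing x with
  | zero =>
      obtain ⟨s, e⟩ := x
      show (Bh (uh Bh (s, e))).2 = e
      rcases h0 : s 0
      · simp [uh, Bh, dB, h0]
      · rcases h1 : s 1
        · have hB : Bf (tl s) = cons false (tl s) := by simp [Bf, h1]
          simp [uh, Bh, dB, h0, h1, hB]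
        · rcases h2 : s 2
          · have hB : Bf (tl s) = cons false (cons true (tl (tl (tl s)))) := by
              simp [Bf, h1, h2]
            simp [uh, Bh, dB, h0, h1, h2, hB]
          · have hB : Bf (tl s) = tl (tl s) := by simp [Bf, h1, h2]
            have ht : tl (tl s) 0 = true := h2
            simp only [uh, h0, if_true, Bh, dB, h1, h2, hB, Bool.and_self, if_true,
              cons_zero, cons_succ, ht, tl_apply, Bool.true_and]
            rw [add_assoc, two_eq_zero, add_zero]
  | succ i ih =>
      obtain ⟨s, e⟩ := x
      rcases h0 : s 0
      · rw [bbF_succ (i+1), bbF_succ i]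
        simp [uh, h0]
      · rw [bbF_succ (i+1)]
        have hinner : uh (bbF (i+1)) (s, e) =
            (cons true (bbF (i+1) (tl s, e)).1, (bbF (i+1) (tl s, e)).2) := by
          simp [uh, h0]
        rw [hinner]
        set p := bbF (i+1) (tl s, e) with hp
        rw [bbF_succ i]
        simp only [uh, cons_zero, if_true, tl_cons, Prod.mk.eta]
        rw [hp]
        exact ih (tl s, e)

lemma oriented_le : orientedF ≤ Subgroup.comap phi K := by
  rw [orientedF, Subgroup.closure_le]
  rintro g ⟨i, rfl⟩
  simp only [Set.mem_setOf_eq, SetLike.mem_coe, Subgroup.mem_comap, map_mul, phi_y]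
  intro x
  have : ((e i * e (i+1)) x).2 = x.2 := by
    rw [Equiv.Perm.mul_apply]; exact gen_parity i x
  rw [this]

/-- `cat n s` prepends `n` ones to `s`. -/
def cat : ℕ → (ℕ → Bool) → (ℕ → Bool)
  | 0, s => s
  | n+1, s => cons true (cat n s)

lemma cat_add (a b : ℕ) (s : ℕ → Bool) : cat (a + b) s = cat a (cat b s) := by
  induction a with
  | zero => simp [cat, Nat.zero_add]
  | succ a ih => rw [Nat.succ_add]; show cons true _ = cons true _; rw [ih]

/-- Application lemma: `uh^[n] f₀` on an `n`-ones prefix. -/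
lemma L_cat (f₀ : X → X) (n : ℕ) (s : ℕ → Bool) (ε : ZMod 2) :
    uh^[n] f₀ (cat n s, ε) = (cat n (f₀ (s, ε)).1, (f₀ (s, ε)).2) := by
  induction n generalizing ε with
  | zero => simp [cat]
  | succ n ih =>
      rw [Function.iterate_succ_apply']
      show uh (uh^[n] f₀) (cons true (cat n s), ε) = _
      simp only [uh, cons_zero, if_true, tl_cons]
      rw [ih]
      rfl

/-- Fix lemma: `uh^[n] f₀` fixes anything with a `false` before position `n`. -/
lemma L_fix (f₀ : X → X) (n k : ℕ) (s : ℕ → Bool) (ε : ZMod 2) (hkn : k < n)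
    (hs : s 0 = false) : uh^[n] f₀ (cat k s, ε) = (cat k s, ε) := by
  induction k generalizing n with
  | zero =>
      obtain ⟨n', rfl⟩ : ∃ n', n = n' + 1 := ⟨n - 1, by omega⟩
      rw [Function.iterate_succ_apply']
      show uh (uh^[n'] f₀) (s, ε) = (cat 0 s, ε)
      show (if s 0 then _ else _) = _
      rw [if_neg (by simp [hs])]
      rfl
  | succ k ih =>
      obtain ⟨n', rfl⟩ : ∃ n', n = n' + 1 := ⟨n - 1, by omega⟩
      rw [Function.iterate_succ_apply']
      show uh (uh^[n'] f₀) (cons true (cat k s), ε) = _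
      simp only [uh, cons_zero, if_true, tl_cons]
      rw [ih n' (by omega)]
      rfl

/-- The all-zeros sequence. -/
def z : ℕ → Bool := fun _ => false

@[simp] lemma z_zero : z 0 = false := rfl
@[simp] lemma z_succ (n : ℕ) : z (n+1) = false := rfl
@[simp] lemma cons_false_z : cons false z = z := by
  funext n; cases n <;> rfl
@[simp] lemma tl_z : tl z = z := rfl

lemma bbF_cat (n : ℕ) (s : ℕ → Bool) (ε : ZMod 2) :
    bbF n (cat n s, ε) = (cat n (Bf s), ε + dB s) := L_cat Bh n s ε

lemma aaF_cat (n : ℕ) (s : ℕ → Bool) (ε : ZMod 2) :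
    aaF n (cat n s, ε) = (cat n (Af s), ε + dA s) := L_cat Ah n s ε

lemma bbF_fix (n k : ℕ) (s : ℕ → Bool) (ε : ZMod 2) (hkn : k < n)
    (hs : s 0 = false) : bbF n (cat k s, ε) = (cat k s, ε) := L_fix Bh n k s ε hkn hs

lemma aaF_fix (n k : ℕ) (s : ℕ → Bool) (ε : ZMod 2) (hkn : k < n)
    (hs : s 0 = false) : aaF n (cat k s, ε) = (cat k s, ε) := L_fix Ah n k s ε hkn hs

-- evaluation helpers
lemma Bf_tt (q : ℕ → Bool) : Bf (cons true (cons true q)) = cons true q := by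
  simp [Bf]
lemma dB_tt (q : ℕ → Bool) : dB (cons true (cons true q)) = 1 := by simp [dB]
lemma dB_t_z : dB (cons true z) = 0 := by simp [dB]
lemma dB_z : dB z = 0 := by simp [dB]
lemma Bf_z : Bf z = z := by simp [Bf]
lemma Bf_t_z : Bf (cons true z) = cons false (cons true z) := by
  have h1 : (cons true z) 1 = false := rfl
  simp [Bf, h1]
lemma dA_t (q : ℕ → Bool) : dA (cons true q) = 1 := by simp [dA]
lemma dA_z : dA z = 0 := by simp [dA]
lemma Af_z : Af z = z := by simp [Af]
lemma Af_t (q : ℕ → Bool) : Af (cons true q) = cons true (cons true q) := by simp [Af]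
lemma Af_ft (q : ℕ → Bool) : Af (cons false (cons true q)) = cons true (cons false q) := by
  have h0 : (cons false (cons true q)) 0 = false := rfl
  have h1 : (cons false (cons true q)) 1 = true := rfl
  simp [Af, h0, h1]
lemma dA_ft (q : ℕ → Bool) : dA (cons false (cons true q)) = 0 := by simp [dA]

lemma one_ne_zero' : (1 : ZMod 2) ≠ 0 := by decide

@[simp] lemma cat_zero (s : ℕ → Bool) : cat 0 s = s := rfl
lemma cat_succ (n : ℕ) (s : ℕ → Bool) : cat (n+1) s = cons true (cat n s) := rfl

lemma cat_split (a b n : ℕ) (h : n = a + b) (s : ℕ → Bool) :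
    cat n s = cat a (cat b s) := by subst h; exact cat_add a b s

lemma not11 (i j : ℕ) (h : j ≠ i + 1) : e i * e j ∉ K := by
  intro hK
  have hw := (mem_K_iff.1 hK) (cat (i+2) z, 0)
  rw [Equiv.Perm.mul_apply, e_apply, e_apply] at hw
  have hv : (bbF i (bbF j (cat (i+2) z, 0))).2 = 0 := hw.1 rfl
  rcases lt_trichotomy j (i+2) with hj | hj | hj
  · -- j ≤ i
    obtain ⟨d, rfl⟩ : ∃ d, i = j + d := ⟨i - j, by omega⟩
    rw [show cat (j+d+2) z = cat j (cons true (cons true (cat d z))) from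
      cat_split j (d+2) _ (by omega) z, bbF_cat, Bf_tt, dB_tt] at hv
    rw [show cat j (cons true (cat d z)) = cat (j+d) (cons true z) from by
      rw [show cons true (cat d z) = cat (d+1) z from rfl, ← cat_add,
        cat_split (j+d) 1 _ (by omega) z]; rfl] at hv
    rw [bbF_cat, dB_t_z] at hv
    simp at hv
  · -- j = i + 2
    subst hj
    rw [bbF_cat, Bf_z, dB_z] at hv
    rw [show cat (i+2) z = cat i (cons true (cons true z)) from by
      rw [cat_split i 2 _ (by omega) z]; rfl] at hv
    rw [bbF_cat, dB_tt] at hv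
    simp at hv
  · -- j > i + 2
    rw [show cat (i+2) z = cat (i+2) z from rfl] at hv
    rw [bbF_fix j (i+2) z 0 (by omega) rfl] at hv
    rw [show cat (i+2) z = cat i (cons true (cons true z)) from by
      rw [cat_split i 2 _ (by omega) z]; rfl] at hv
    rw [bbF_cat, dB_tt] at hv
    simp at hv

lemma not1m (i j : ℕ) (h : i ≠ j) : e i * (e j)⁻¹ ∉ K := by
  intro hK
  rcases lt_trichotomy i j with hij | hij | hij
  · rcases Nat.lt_or_ge (i+1) j with hj2 | hj2
    · -- j ≥ i + 2, witness cat (i+2) z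
      have hw := (mem_K_iff.1 hK) (cat (i+2) z, 0)
      rw [Equiv.Perm.mul_apply, e_apply, e_inv_apply] at hw
      have hv : (bbF i (aaF j (cat (i+2) z, 0))).2 = 0 := hw.1 rfl
      rcases Nat.lt_or_ge (i+2) j with hj3 | hj3
      · rw [aaF_fix j (i+2) z 0 (by omega) rfl] at hv
        rw [show cat (i+2) z = cat i (cons true (cons true z)) from by
          rw [cat_split i 2 _ (by omega) z]; rfl] at hv
        rw [bbF_cat, dB_tt] at hv
        simp at hv
      · have : j = i + 2 := by omega
        subst this
        rw [aaF_cat, Af_z, dA_z] at hv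
        rw [show cat (i+2) z = cat i (cons true (cons true z)) from by
          rw [cat_split i 2 _ (by omega) z]; rfl] at hv
        rw [bbF_cat, dB_tt] at hv
        simp at hv
    · -- j = i + 1, witness cat (i+1) (cons false (cons true z))
      have : j = i + 1 := by omega
      subst this
      have hw := (mem_K_iff.1 hK) (cat (i+1) (cons false (cons true z)), 0)
      rw [Equiv.Perm.mul_apply, e_apply, e_inv_apply] at hw
      have hv : (bbF i (aaF (i+1) (cat (i+1) (cons false (cons true z)), 0))).2 = 0 :=
        hw.1 rfl
      rw [aaF_cat, Af_ft, dA_ft, cons_false_z] at hv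
      rw [show cat (i+1) (cons true z) = cat i (cons true (cons true z))
        from by rw [cat_split i 1 _ (by omega)]; rfl] at hv
      rw [bbF_cat, dB_tt] at hv
      simp at hv
  · exact absurd hij h
  · -- i > j, witness cat (j+1) z
    have hw := (mem_K_iff.1 hK) (cat (j+1) z, 0)
    rw [Equiv.Perm.mul_apply, e_apply, e_inv_apply] at hw
    have hv : (bbF i (aaF j (cat (j+1) z, 0))).2 = 0 := hw.1 rfl
    rw [show cat (j+1) z = cat j (cons true z) from by
      rw [cat_split j 1 _ (by omega)]; rfl] at hv
    rw [aaF_cat, Af_t, dA_t] at hv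
    rw [show cat j (cons true (cons true z)) = cat (j+2) z from
      (cat_split j 2 _ (by omega) z).symm] at hv
    rcases Nat.lt_or_ge (j+2) i with hi3 | hi3
    · rw [bbF_fix i (j+2) z _ (by omega) rfl] at hv
      simp at hv
    · rcases Nat.lt_or_ge (j+1) i with hi2 | hi2
      · have : i = j + 2 := by omega
        subst this
        rw [bbF_cat, dB_z] at hv
        simp at hv
      · have : i = j + 1 := by omega
        subst this
        rw [show cat (j+2) z = cat (j+1) (cons true z) from by
          rw [cat_split (j+1) 1 _ (by omega)]; rfl] at hv
        rw [bbF_cat, dB_t_z] at hv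
        simp at hv

lemma notm1 (i j : ℕ) (h : i ≠ j) : (e i)⁻¹ * e j ∉ K := by
  intro hK
  rcases lt_trichotomy i j with hij | hij | hij
  · -- i < j, witness cat (j+1) z
    obtain ⟨d, rfl⟩ : ∃ d, j = i + (d + 1) := ⟨j - i - 1, by omega⟩
    have hw := (mem_K_iff.1 hK) (cat (i+(d+1)+1) z, 0)
    rw [Equiv.Perm.mul_apply, e_apply, e_inv_apply] at hw
    have hv : (aaF i (bbF (i+(d+1)) (cat (i+(d+1)+1) z, 0))).2 = 0 := hw.1 rfl
    rw [show cat (i+(d+1)+1) z = cat (i+(d+1)) (cons true z) from by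
      rw [cat_split (i+(d+1)) 1 _ (by omega)]; rfl] at hv
    rw [bbF_cat, Bf_t_z, dB_t_z] at hv
    rw [show cat (i+(d+1)) (cons false (cons true z)) =
        cat i (cons true (cat d (cons false (cons true z)))) from by
      rw [cat_split i (d+1) _ (by omega)]; rfl] at hv
    rw [aaF_cat, dA_t] at hv
    simp at hv
  · exact absurd hij h
  · -- i > j, witness cat (j+2) z
    have hw := (mem_K_iff.1 hK) (cat (j+2) z, 0)
    rw [Equiv.Perm.mul_apply, e_apply, e_inv_apply] at hw
    have hv : (aaF i (bbF j (cat (j+2) z, 0))).2 = 0 := hw.1 rfl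
    rw [show cat (j+2) z = cat j (cons true (cons true z)) from by
      rw [cat_split j 2 _ (by omega)]; rfl] at hv
    rw [bbF_cat, Bf_tt, dB_tt] at hv
    rw [show cat j (cons true z) = cat (j+1) z from
      (cat_split j 1 _ (by omega) z).symm] at hv
    rcases Nat.lt_or_ge (j+1) i with hi2 | hi2
    · rw [aaF_fix i (j+1) z _ (by omega) rfl] at hv
      simp at hv
    · have : i = j + 1 := by omega
      subst this
      rw [aaF_cat, dA_z] at hv
      simp at hv

lemma mem_oriented (i : ℕ) : y i * y (i + 1) ∈ orientedF :=
  Subgroup.subset_closure ⟨i, rfl⟩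

end OrientedAux


/-- Characterization of length-two words in `F⃗`: for `m, k ∈ {1, -1}`,
`yᵢ^m yⱼ^k ∈ F⃗` iff (`j = i+1` and `m = k = 1`), or (`i = j+1` and
`m = k = -1`), or (`i = j` and `m = -k`, in which case the product is the
identity). -/
theorem length_two_words_in_orientedF (i j : ℕ) (m k : ℤ)
    (hm : m = 1 ∨ m = -1) (hk : k = 1 ∨ k = -1) :
    (y i ^ m * y j ^ k ∈ orientedF ↔
      (j = i + 1 ∧ m = 1 ∧ k = 1) ∨ (i = j + 1 ∧ m = -1 ∧ k = -1) ∨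
      (i = j ∧ m = -k)) ∧
    (i = j → m = -k → y i ^ m * y j ^ k = 1) := by
  open OrientedAux in
  have hid : i = j → m = -k → y i ^ m * y j ^ k = 1 := by
    rintro rfl hmk
    rcases hk with rfl | rfl
    · subst hmk
      rw [zpow_neg_one, zpow_one, inv_mul_cancel]
    · have hm1 : m = 1 := by omega
      subst hm1
      rw [zpow_one, zpow_neg_one, mul_inv_cancel]
  refine ⟨⟨?_, ?_⟩, hid⟩
  · -- forward direction
    intro hmem
    by_contra hcon
    push_neg at hcon
    obtain ⟨h1, h2, h3⟩ := hcon
    have hK : OrientedAux.phi (y i ^ m * y j ^ k) ∈ OrientedAux.K :=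
      OrientedAux.oriented_le hmem
    rcases hm with rfl | rfl <;> rcases hk with rfl | rfl
    · have hj : j ≠ i + 1 := fun hh => h1 hh rfl rfl
      have hphi : OrientedAux.phi (y i ^ (1:ℤ) * y j ^ (1:ℤ)) =
          OrientedAux.e i * OrientedAux.e j := by
        simp [zpow_one, map_mul]
      rw [hphi] at hK
      exact OrientedAux.not11 i j hj hK
    · have hij : i ≠ j := fun hh => h3 hh (by norm_num)
      have hphi : OrientedAux.phi (y i ^ (1:ℤ) * y j ^ (-1:ℤ)) =
          OrientedAux.e i * (OrientedAux.e j)⁻¹ := by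
        simp [zpow_one, zpow_neg_one, map_mul, map_inv]
      rw [hphi] at hK
      exact OrientedAux.not1m i j hij hK
    · have hij : i ≠ j := fun hh => h3 hh rfl
      have hphi : OrientedAux.phi (y i ^ (-1:ℤ) * y j ^ (1:ℤ)) =
          (OrientedAux.e i)⁻¹ * OrientedAux.e j := by
        simp [zpow_one, zpow_neg_one, map_mul, map_inv]
      rw [hphi] at hK
      exact OrientedAux.notm1 i j hij hK
    · have hij : i ≠ j + 1 := fun hh => h2 hh rfl rfl
      have hphi : OrientedAux.phi (y i ^ (-1:ℤ) * y j ^ (-1:ℤ)) =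
          (OrientedAux.e i)⁻¹ * (OrientedAux.e j)⁻¹ := by
        simp [zpow_neg_one, map_mul, map_inv]
      rw [hphi] at hK
      have hK2 : OrientedAux.e j * OrientedAux.e i ∈ OrientedAux.K := by
        have := OrientedAux.K.inv_mem hK
        rwa [mul_inv_rev, inv_inv, inv_inv] at this
      exact OrientedAux.not11 j i hij hK2
  · -- reverse direction
    rintro (⟨rfl, rfl, rfl⟩ | ⟨rfl, rfl, rfl⟩ | ⟨rfl, hmk⟩)
    · rw [zpow_one, zpow_one]
      exact OrientedAux.mem_oriented i
    · rw [zpow_neg_one, zpow_neg_one, ← mul_inv_rev]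
      exact inv_mem (OrientedAux.mem_oriented j)
    · rw [hid rfl hmk]
      exact one_mem _
end
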